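/- arXiv:1712.05883 — 3 statements merged into one kernel-verified Lean document; each statement's English description precedes it below -/
import Mathlib

section
/- Let n ≥ 3, let G_n be the straight linear 2-tree on n vertices, and let m = n − 2. Then for all integers j, k with 1 ≤ j, 1 ≤ k, and j + k + 1 ≤ n, the resistance distances satisfy r_{G_n}(j, j+k+1) − r_{G_n}(j, j+k) = (F_{k+1}·F_{2j+k−1} − F_k·F_{2j+k−2})·F_{2m−2j−2k+3} / F_{2m+2}. -/
/-- The straight linear 2-tree on `n` vertices: vertices `0, …, n-1` (representing
`1, …, n`), with distinct vertices adjacent iff they differ by at most 2. -/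
def linear2Tree (n : ℕ) : SimpleGraph (Fin n) where
  Adj i j := i ≠ j ∧ i.val ≤ j.val + 2 ∧ j.val ≤ i.val + 2
  symm := by
    constructor
    intro i j h
    exact ⟨h.1.symm, h.2.2, h.2.1⟩
  loopless := by
    constructor
    intro i h
    exact h.1 rfl

open scoped Classical in
/-- The combinatorial Laplacian (degree matrix minus adjacency matrix) of a graph on `Fin n`. -/
noncomputable def lap {n : ℕ} (G : SimpleGraph (Fin n)) : Matrix (Fin n) (Fin n) ℝ :=
  Matrix.of fun a b =>
    if a = b then ∑ c : Fin n, (if G.Adj a c then (1 : ℝ) else 0)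
    else if G.Adj a b then -1 else 0

/-- The source vector `e_i - e_j`. -/
def esrc {n : ℕ} (i j : Fin n) : Fin n → ℝ :=
  fun t => (if t = i then 1 else 0) - (if t = j then 1 else 0)

/-- `IsResistance G i j r` says: a solution `v` of `L v = e_i - e_j` exists, and every such
solution satisfies `r = v i - v j`; i.e. the resistance distance between `i` and `j` is `r`. -/
def IsResistance {n : ℕ} (G : SimpleGraph (Fin n)) (i j : Fin n) (r : ℝ) : Prop :=
  (∃ v : Fin n → ℝ, (lap G).mulVec v = esrc i j) ∧
  ∀ v : Fin n → ℝ, (lap G).mulVec v = esrc i j → r = v i - v j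

/-- Fibonacci numbers extended to integer indices, with `F_{-p} = (-1)^{p+1} F_p`. -/
def fibZ (k : ℤ) : ℤ :=
  if 0 ≤ k then (Nat.fib k.toNat : ℤ)
  else (-1) ^ ((-k).toNat + 1) * (Nat.fib (-k).toNat : ℤ)

/-- The Lucas numbers: `L_0 = 2`, `L_1 = 1`, `L_{n+2} = L_{n+1} + L_n`. -/
def lucas : ℕ → ℕ
  | 0 => 2
  | 1 => 1
  | n + 2 => lucas (n + 1) + lucas n

namespace Stmt10
open Finset

open scoped Classical

open scoped Classical

lemma lap_apply {n : ℕ} (G : SimpleGraph (Fin n)) (v : Fin n → ℝ) (t : Fin n) :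
    (lap G).mulVec v t = ∑ c : Fin n, (if G.Adj t c then v t - v c else 0) := by
  classical
  simp only [lap, Matrix.mulVec, dotProduct, Matrix.of_apply]
  set S : ℝ := ∑ d : Fin n, (if G.Adj t d then (1:ℝ) else 0) with hS
  have key : ∀ c : Fin n,
      (if t = c then S else if G.Adj t c then -1 else 0) * v c
      = (if t = c then S * v c else 0) + (if G.Adj t c then -(v c) else 0) := by
    intro c
    by_cases hc : t = c
    · rw [if_pos hc, if_pos hc, ← hc, if_neg (G.irrefl)]; ring
    · rw [if_neg hc, if_neg hc, zero_add]; split_ifs <;> ring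
  have key2 : ∀ c : Fin n, (if G.Adj t c then v t - v c else 0)
      = (if G.Adj t c then (1:ℝ) else 0) * v t + (if G.Adj t c then -(v c) else 0) := by
    intro c; split_ifs <;> ring
  have hL : (∑ c : Fin n, (if t = c then S else if G.Adj t c then -1 else 0) * v c)
      = S * v t + ∑ c : Fin n, (if G.Adj t c then -(v c) else 0) := by
    rw [Finset.sum_congr rfl (fun c _ => key c), Finset.sum_add_distrib]
    congr 1
    simp
  have hR : (∑ c : Fin n, (if G.Adj t c then v t - v c else 0))
      = S * v t + ∑ c : Fin n, (if G.Adj t c then -(v c) else 0) := by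
    rw [Finset.sum_congr rfl (fun c _ => key2 c), Finset.sum_add_distrib, ← Finset.sum_mul]
  rw [hL, hR]

lemma lap_apply_nat (n : ℕ) (v : ℕ → ℝ) (t : Fin n) :
    (lap (linear2Tree n)).mulVec (fun i : Fin n => v i.val) t
      = ∑ c ∈ Finset.range n,
          (if (t.val ≠ c ∧ t.val ≤ c + 2 ∧ c ≤ t.val + 2) then v t.val - v c else 0) := by
  classical
  rw [lap_apply]
  rw [← Fin.sum_univ_eq_sum_range
    (fun c => (if (t.val ≠ c ∧ t.val ≤ c + 2 ∧ c ≤ t.val + 2) then v t.val - v c else 0)) n]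
  apply Finset.sum_congr rfl
  intro c _
  have hadj : (linear2Tree n).Adj t c ↔ (t.val ≠ c.val ∧ t.val ≤ c.val + 2 ∧ c.val ≤ t.val + 2) := by
    constructor
    · rintro ⟨h1, h2⟩; exact ⟨fun h => h1 (Fin.ext h), h2⟩
    · rintro ⟨h1, h2⟩; exact ⟨fun h => h1 (congrArg Fin.val h), h2⟩
  by_cases hA : (linear2Tree n).Adj t c
  · rw [if_pos hA, if_pos (hadj.mp hA)]
  · rw [if_neg hA, if_neg (fun hc => hA (hadj.mpr hc))]

lemma sum_support (n : ℕ) (f : ℕ → ℝ) (S : Finset ℕ) (hS : S ⊆ Finset.range n)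
    (h0 : ∀ c ∈ Finset.range n, c ∉ S → f c = 0) :
    ∑ c ∈ Finset.range n, f c = ∑ c ∈ S, f c :=
  (Finset.sum_subset hS h0).symm

lemma fibcast (i : ℕ) : (Nat.fib (i+2) : ℤ) = Nat.fib i + Nat.fib (i+1) := by
  exact_mod_cast Nat.fib_add_two

lemma cassini (m : ℕ) : ((Nat.fib (m+1) : ℤ))^2 = Nat.fib m * Nat.fib (m+1) + (Nat.fib m)^2 + (-1)^m := by
  induction m with
  | zero => norm_num
  | succ i ih => rw [fibcast i]; linear_combination (-1 : ℤ) * ih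

lemma fibI1 (w : ℕ) : (Nat.fib (w+6) : ℤ) + Nat.fib w = 2 * Nat.fib (w+4) + 2 * Nat.fib (w+2) := by
  rw [fibcast (w+4), fibcast (w+3), fibcast (w+2), fibcast (w+1), fibcast w]; ring

lemma fibI4 (w : ℕ) : (Nat.fib w : ℤ) * Nat.fib (w+1) + Nat.fib (w+3) * Nat.fib (w+4)
    = 2 * (Nat.fib (w+1) * Nat.fib (w+2)) + 2 * (Nat.fib (w+2) * Nat.fib (w+3)) := by
  rw [fibcast (w+2), fibcast (w+1), fibcast w]; ring

lemma fibI7 (w : ℕ) : ((Nat.fib (w+3) : ℤ))^2 + Nat.fib w * Nat.fib (w+1)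
    = 2 * (Nat.fib (w+1) * Nat.fib (w+2)) + Nat.fib (w+2) * Nat.fib (w+3) := by
  rw [fibcast (w+1), fibcast w]; ring

lemma fibI8 (w : ℕ) : (Nat.fib (w+5) : ℤ) + Nat.fib w = 2 * Nat.fib (w+2) + Nat.fib (w+4) := by
  rw [fibcast (w+3), fibcast (w+2), fibcast (w+1), fibcast w]; ring

lemma fibI8b (w : ℕ) : (Nat.fib (w+3) : ℤ) + Nat.fib w = 2 * Nat.fib (w+2) := by
  rw [fibcast (w+1), fibcast w]; ring

lemma fibI9 (w : ℕ) : ((Nat.fib (w+2):ℤ))^2 + Nat.fib w * Nat.fib (w+1)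
    - 2 * (Nat.fib (w+1) * Nat.fib (w+2)) = (-1)^(w+1) := by
  rw [fibcast w]; linear_combination (-1:ℤ) * cassini w

lemma powE (p w : ℕ) : ((-1:ℤ))^(2*p+w) = (-1)^w := by
  rw [pow_add, pow_mul]; norm_num

lemma sqE (w : ℕ) : ((-1:ℤ))^w * (-1)^w = 1 := by
  rw [← pow_add, ← two_mul, pow_mul]; norm_num

def Dz (n : ℕ) : ℤ := Nat.fib (2*n-2)

def Bz (n p u : ℕ) : ℤ :=
  (-1)^(u+p) * (Nat.fib (n-1-p) : ℤ)^2 * Nat.fib (2*u+1)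
  + (if p ≤ u then (-1)^(u-p+1) * Dz n * Nat.fib (u-p) * Nat.fib (u-p+1) else 0)

lemma Bz_lt (n p u s e x : ℕ) (h : u < p) (hs : n-1-p = s) (he : 2*u+1 = e) (hx : u+p = x) :
    Bz n p u = (-1)^x * (Nat.fib s : ℤ)^2 * Nat.fib e := by
  rw [Bz, if_neg (by omega), hs, he, hx, add_zero]

lemma Bz_ge (n p u s e x r : ℕ) (h : p ≤ u) (hs : n-1-p = s) (he : 2*u+1 = e) (hx : u+p = x)
    (hr : u-p = r) :
    Bz n p u = (-1)^x * (Nat.fib s : ℤ)^2 * Nat.fib e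
      + (-1)^(r+1) * Dz n * Nat.fib r * Nat.fib (r+1) := by
  rw [Bz, if_pos h, hs, he, hx, hr]

lemma fib3 : Nat.fib 3 = 2 := by decide
lemma fib4 : Nat.fib 4 = 3 := by decide
lemma fib5 : Nat.fib 5 = 5 := by decide

/-- Row 0. -/
lemma rowA (n p : ℕ) : 2 * Bz n p 0 + Bz n p 1 = (if 0 = p then Dz n else 0) := by
  rcases Nat.lt_or_ge 1 p with h1 | h1
  · rw [Bz_lt n p 0 (n-1-p) 1 p (by omega) rfl (by ring) (by ring),
        Bz_lt n p 1 (n-1-p) 3 (p+1) (by omega) rfl (by ring) (by ring),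
        if_neg (by omega)]
    simp only [fib3, Nat.fib_one]
    push_cast
    ring
  · interval_cases p
    · rw [Bz_ge n 0 0 (n-1-0) 1 0 0 (by omega) rfl (by ring) (by ring) (by omega),
          Bz_ge n 0 1 (n-1-0) 3 1 1 (by omega) rfl (by ring) (by ring) (by omega),
          if_pos rfl]
      simp only [fib3, Nat.fib_one, Nat.fib_zero, Nat.fib_two]
      push_cast
      ring
    · rw [Bz_lt n 1 0 (n-1-1) 1 1 (by omega) rfl (by ring) (by ring),
          Bz_ge n 1 1 (n-1-1) 3 2 0 (by omega) rfl (by ring) (by ring) (by omega),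
          if_neg (by omega)]
      simp only [fib3, Nat.fib_one, Nat.fib_zero]
      push_cast
      ring

/-- Row 1 (valid for any `n`, `p`; used when `n ≥ 4`). -/
lemma rowB1 (n p : ℕ) : -Bz n p 0 + 2 * Bz n p 1 + Bz n p 2 = (if 1 = p then Dz n else 0) := by
  rcases Nat.lt_or_ge 2 p with h1 | h1
  · rw [Bz_lt n p 0 (n-1-p) 1 p (by omega) rfl (by ring) (by ring),
        Bz_lt n p 1 (n-1-p) 3 (p+1) (by omega) rfl (by ring) (by ring),
        Bz_lt n p 2 (n-1-p) 5 (p+2) (by omega) rfl (by ring) (by ring),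
        if_neg (by omega)]
    simp only [fib3, fib5, Nat.fib_one]
    push_cast
    ring
  · interval_cases p
    · rw [Bz_ge n 0 0 (n-1-0) 1 0 0 (by omega) rfl (by ring) (by ring) (by omega),
          Bz_ge n 0 1 (n-1-0) 3 1 1 (by omega) rfl (by ring) (by ring) (by omega),
          Bz_ge n 0 2 (n-1-0) 5 2 2 (by omega) rfl (by ring) (by ring) (by omega),
          if_neg (by omega)]
      simp only [fib3, fib5, Nat.fib_one, Nat.fib_zero, Nat.fib_two]
      push_cast
      ring
    · rw [Bz_lt n 1 0 (n-1-1) 1 1 (by omega) rfl (by ring) (by ring),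
          Bz_ge n 1 1 (n-1-1) 3 2 0 (by omega) rfl (by ring) (by ring) (by omega),
          Bz_ge n 1 2 (n-1-1) 5 3 1 (by omega) rfl (by ring) (by ring) (by omega),
          if_pos rfl]
      simp only [fib3, fib5, Nat.fib_one, Nat.fib_zero, Nat.fib_two]
      push_cast
      ring
    · rw [Bz_lt n 2 0 (n-1-2) 1 2 (by omega) rfl (by ring) (by ring),
          Bz_lt n 2 1 (n-1-2) 3 3 (by omega) rfl (by ring) (by ring),
          Bz_ge n 2 2 (n-1-2) 5 4 0 (by omega) rfl (by ring) (by ring) (by omega),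
          if_neg (by omega)]
      simp only [fib3, fib5, Nat.fib_one, Nat.fib_zero]
      push_cast
      ring

/-- Row 1 for `n = 3`. -/
lemma rowB2 (p : ℕ) (hp : p < 3) : -Bz 3 p 0 + Bz 3 p 1 = (if 1 = p then Dz 3 else 0) := by
  interval_cases p <;> decide


/-- Interior row `t = t'+2` with `t'+5 ≤ n`. -/
lemma rowC (n p t' : ℕ) (h3 : t' + 5 ≤ n) :
    -Bz n p t' - 2*Bz n p (t'+1) + 2*Bz n p (t'+2) + Bz n p (t'+3)
      = (if t'+2 = p then Dz n else 0) := by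
  rcases Nat.lt_or_ge (t'+3) p with h4 | h4
  · -- p ≥ t'+4
    rw [Bz_lt n p t' (n-1-p) (2*t'+1) (t'+p) (by omega) rfl (by ring) (by ring),
        Bz_lt n p (t'+1) (n-1-p) (2*t'+1+2) (t'+p+1) (by omega) rfl (by ring) (by ring),
        Bz_lt n p (t'+2) (n-1-p) (2*t'+1+4) (t'+p+2) (by omega) rfl (by ring) (by ring),
        Bz_lt n p (t'+3) (n-1-p) (2*t'+1+6) (t'+p+3) (by omega) rfl (by ring) (by ring),
        if_neg (by omega)]
    linear_combination (-((-1:ℤ)^(t'+p) * (Nat.fib (n-1-p) : ℤ)^2)) * fibI1 (2*t'+1)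
  rcases Nat.lt_or_ge (t'+2) p with h3' | h3'
  · -- p = t'+3
    have hp : p = t'+3 := by omega
    subst hp
    rw [Bz_lt n (t'+3) t' (n-1-(t'+3)) (2*t'+1) (2*t'+3) (by omega) rfl (by ring) (by ring),
        Bz_lt n (t'+3) (t'+1) (n-1-(t'+3)) (2*t'+1+2) (2*t'+4) (by omega) rfl (by ring) (by ring),
        Bz_lt n (t'+3) (t'+2) (n-1-(t'+3)) (2*t'+1+4) (2*t'+5) (by omega) rfl (by ring) (by ring),
        Bz_ge n (t'+3) (t'+3) (n-1-(t'+3)) (2*t'+1+6) (2*t'+6) 0 (by omega) rfl (by ring) (by ring) (by omega),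
        if_neg (by omega), powE t' 3, powE t' 4, powE t' 5, powE t' 6]
    simp only [Nat.fib_zero, Nat.fib_one]
    push_cast
    linear_combination ((Nat.fib (n-1-(t'+3)) : ℤ)^2) * fibI1 (2*t'+1)
  rcases Nat.lt_or_ge (t'+1) p with h2' | h2'
  · -- p = t'+2
    have hp : p = t'+2 := by omega
    subst hp
    rw [Bz_lt n (t'+2) t' (n-1-(t'+2)) (2*t'+1) (2*t'+2) (by omega) rfl (by ring) (by ring),
        Bz_lt n (t'+2) (t'+1) (n-1-(t'+2)) (2*t'+1+2) (2*t'+3) (by omega) rfl (by ring) (by ring),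
        Bz_ge n (t'+2) (t'+2) (n-1-(t'+2)) (2*t'+1+4) (2*t'+4) 0 (by omega) rfl (by ring) (by ring) (by omega),
        Bz_ge n (t'+2) (t'+3) (n-1-(t'+2)) (2*t'+1+6) (2*t'+5) 1 (by omega) rfl (by ring) (by ring) (by omega),
        if_pos rfl, powE t' 2, powE t' 3, powE t' 4, powE t' 5]
    simp only [Nat.fib_zero, Nat.fib_one, Nat.fib_two]
    push_cast
    linear_combination (-((Nat.fib (n-1-(t'+2)) : ℤ)^2)) * fibI1 (2*t'+1)
  rcases Nat.lt_or_ge t' p with h1' | h1'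
  · -- p = t'+1
    have hp : p = t'+1 := by omega
    subst hp
    rw [Bz_lt n (t'+1) t' (n-1-(t'+1)) (2*t'+1) (2*t'+1) (by omega) rfl (by ring) (by ring),
        Bz_ge n (t'+1) (t'+1) (n-1-(t'+1)) (2*t'+1+2) (2*t'+2) 0 (by omega) rfl (by ring) (by ring) (by omega),
        Bz_ge n (t'+1) (t'+2) (n-1-(t'+1)) (2*t'+1+4) (2*t'+3) 1 (by omega) rfl (by ring) (by ring) (by omega),
        Bz_ge n (t'+1) (t'+3) (n-1-(t'+1)) (2*t'+1+6) (2*t'+4) 2 (by omega) rfl (by ring) (by ring) (by omega),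
        if_neg (by omega), powE t' 1, powE t' 2, powE t' 3, powE t' 4]
    simp only [Nat.fib_zero, Nat.fib_one, Nat.fib_two, fib3]
    push_cast
    linear_combination ((Nat.fib (n-1-(t'+1)) : ℤ)^2) * fibI1 (2*t'+1)
  · -- p ≤ t'
    obtain ⟨w, rfl⟩ : ∃ w, t' = p + w := ⟨t'-p, by omega⟩
    rw [Bz_ge n p (p+w) (n-1-p) (2*p+(2*w+1)) (2*p+w) w (by omega) rfl (by ring) (by ring) (by omega),
        Bz_ge n p (p+w+1) (n-1-p) (2*p+(2*w+1)+2) (2*p+(w+1)) (w+1) (by omega) rfl (by ring) (by ring) (by omega),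
        Bz_ge n p (p+w+2) (n-1-p) (2*p+(2*w+1)+4) (2*p+(w+2)) (w+2) (by omega) rfl (by ring) (by ring) (by omega),
        Bz_ge n p (p+w+3) (n-1-p) (2*p+(2*w+1)+6) (2*p+(w+3)) (w+3) (by omega) rfl (by ring) (by ring) (by omega),
        if_neg (by omega), powE p w, powE p (w+1), powE p (w+2), powE p (w+3)]
    linear_combination (-((-1:ℤ)^w * (Nat.fib (n-1-p) : ℤ)^2)) * fibI1 (2*p+(2*w+1))
      + ((-1:ℤ)^w * Dz n) * fibI4 w


lemma Dz_eq (n d : ℕ) (h : 2*n-2 = d) : Dz n = (Nat.fib d : ℤ) := by rw [Dz, h]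

/-- Row `n-2` for `n ≥ 4`, written with `n = ν+4`, `t = ν+2`. -/
lemma rowD (ν p : ℕ) (hp : p < ν + 4) :
    -Bz (ν+4) p ν - 2*Bz (ν+4) p (ν+1) + Bz (ν+4) p (ν+2)
      = (if ν+2 = p then Dz (ν+4) else 0) := by
  have hD : Dz (ν+4) = (Nat.fib (2*ν+1+5) : ℤ) := Dz_eq _ _ (by omega)
  rcases Nat.lt_or_ge (ν+2) p with h4 | h4
  · -- p = ν+3, s = 0
    have hp3 : p = ν+3 := by omega
    subst hp3
    rw [Bz_lt (ν+4) (ν+3) ν 0 (2*ν+1) (2*ν+3) (by omega) (by omega) (by ring) (by ring),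
        Bz_lt (ν+4) (ν+3) (ν+1) 0 (2*ν+1+2) (2*ν+4) (by omega) (by omega) (by ring) (by ring),
        Bz_lt (ν+4) (ν+3) (ν+2) 0 (2*ν+1+4) (2*ν+5) (by omega) (by omega) (by ring) (by ring),
        if_neg (by omega)]
    simp [Nat.fib_zero]
  rcases Nat.lt_or_ge (ν+1) p with h3 | h3
  · -- p = ν+2, s = 1
    have hp2 : p = ν+2 := by omega
    subst hp2
    rw [Bz_lt (ν+4) (ν+2) ν 1 (2*ν+1) (2*ν+2) (by omega) (by omega) (by ring) (by ring),
        Bz_lt (ν+4) (ν+2) (ν+1) 1 (2*ν+1+2) (2*ν+3) (by omega) (by omega) (by ring) (by ring),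
        Bz_ge (ν+4) (ν+2) (ν+2) 1 (2*ν+1+4) (2*ν+4) 0 (by omega) (by omega) (by ring) (by ring) (by omega),
        if_pos rfl, powE ν 2, powE ν 3, powE ν 4, hD]
    simp only [Nat.fib_zero, Nat.fib_one]
    push_cast
    linear_combination (-1:ℤ) * fibI8 (2*ν+1)
  rcases Nat.lt_or_ge ν p with h2 | h2
  · -- p = ν+1, s = 2
    have hp1 : p = ν+1 := by omega
    subst hp1
    rw [Bz_lt (ν+4) (ν+1) ν 2 (2*ν+1) (2*ν+1) (by omega) (by omega) (by ring) (by ring),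
        Bz_ge (ν+4) (ν+1) (ν+1) 2 (2*ν+1+2) (2*ν+2) 0 (by omega) (by omega) (by ring) (by ring) (by omega),
        Bz_ge (ν+4) (ν+1) (ν+2) 2 (2*ν+1+4) (2*ν+3) 1 (by omega) (by omega) (by ring) (by ring) (by omega),
        if_neg (by omega), powE ν 1, powE ν 2, powE ν 3, hD]
    simp only [Nat.fib_zero, Nat.fib_one, Nat.fib_two]
    push_cast
    linear_combination (1:ℤ) * fibI8 (2*ν+1)
  · -- p ≤ ν : s = w+3 with ν = p + w
    obtain ⟨w, rfl⟩ : ∃ w, ν = p + w := ⟨ν-p, by omega⟩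
    have hD' : Dz (p+w+4) = (Nat.fib (2*p+(2*w+1)+5) : ℤ) := Dz_eq _ _ (by omega)
    rw [Bz_ge (p+w+4) p (p+w) (w+3) (2*p+(2*w+1)) (2*p+w) w (by omega) (by omega) (by ring) (by ring) (by omega),
        Bz_ge (p+w+4) p (p+w+1) (w+3) (2*p+(2*w+1)+2) (2*p+(w+1)) (w+1) (by omega) (by omega) (by ring) (by ring) (by omega),
        Bz_ge (p+w+4) p (p+w+2) (w+3) (2*p+(2*w+1)+4) (2*p+(w+2)) (w+2) (by omega) (by omega) (by ring) (by ring) (by omega),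
        if_neg (by omega), powE p w, powE p (w+1), powE p (w+2), hD']
    linear_combination (-((-1:ℤ)^w * (Nat.fib (w+3) : ℤ)^2)) * fibI8 (2*p+(2*w+1))
      + ((-1:ℤ)^w * (Nat.fib (2*p+(2*w+1)+5) : ℤ)) * fibI7 w

/-- Row `n-1` for `n ≥ 3`, written with `n = ν+3`, `t = ν+2`. -/
lemma rowE (ν p : ℕ) (hp : p < ν + 3) :
    -Bz (ν+3) p ν - 2*Bz (ν+3) p (ν+1)
      = (if ν+2 = p then Dz (ν+3) else 0) - Dz (ν+3) := by
  have hD : Dz (ν+3) = (Nat.fib (2*ν+1+3) : ℤ) := Dz_eq _ _ (by omega)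
  rcases Nat.lt_or_ge (ν+1) p with h3 | h3
  · -- p = ν+2, s = 0
    have hp2 : p = ν+2 := by omega
    subst hp2
    rw [Bz_lt (ν+3) (ν+2) ν 0 (2*ν+1) (2*ν+2) (by omega) (by omega) (by ring) (by ring),
        Bz_lt (ν+3) (ν+2) (ν+1) 0 (2*ν+1+2) (2*ν+3) (by omega) (by omega) (by ring) (by ring),
        if_pos rfl]
    simp [Nat.fib_zero]
  rcases Nat.lt_or_ge ν p with h2 | h2
  · -- p = ν+1, s = 1
    have hp1 : p = ν+1 := by omega
    subst hp1
    rw [Bz_lt (ν+3) (ν+1) ν 1 (2*ν+1) (2*ν+1) (by omega) (by omega) (by ring) (by ring),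
        Bz_ge (ν+3) (ν+1) (ν+1) 1 (2*ν+1+2) (2*ν+2) 0 (by omega) (by omega) (by ring) (by ring) (by omega),
        if_neg (by omega), powE ν 1, powE ν 2, hD]
    simp only [Nat.fib_zero, Nat.fib_one]
    push_cast
    linear_combination (1:ℤ) * fibI8b (2*ν+1)
  · -- p ≤ ν : s = w+2 with ν = p + w
    obtain ⟨w, rfl⟩ : ∃ w, ν = p + w := ⟨ν-p, by omega⟩
    have hD' : Dz (p+w+3) = (Nat.fib (2*p+(2*w+1)+3) : ℤ) := Dz_eq _ _ (by omega)
    rw [Bz_ge (p+w+3) p (p+w) (w+2) (2*p+(2*w+1)) (2*p+w) w (by omega) (by omega) (by ring) (by ring) (by omega),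
        Bz_ge (p+w+3) p (p+w+1) (w+2) (2*p+(2*w+1)+2) (2*p+(w+1)) (w+1) (by omega) (by omega) (by ring) (by ring) (by omega),
        if_neg (by omega), powE p w, powE p (w+1), hD']
    have hs := sqE w
    linear_combination (-((-1:ℤ)^w * (Nat.fib (w+2) : ℤ)^2)) * fibI8b (2*p+(2*w+1))
      + ((-1:ℤ)^w * (Nat.fib (2*p+(2*w+1)+3) : ℤ)) * fibI9 w
      + (-(Nat.fib (2*p+(2*w+1)+3) : ℤ)) * hs


noncomputable def vv (n p : ℕ) : ℕ → ℝ :=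
  fun t => ((∑ u ∈ Finset.Ico t (n-1), Bz n p u : ℤ) : ℝ) / (Dz n : ℝ)

lemma Dz_pos (n : ℕ) (hn : 3 ≤ n) : (0:ℝ) < (Dz n : ℝ) := by
  have : 0 < Nat.fib (2*n-2) := Nat.fib_pos.mpr (by omega)
  rw [Dz]; exact_mod_cast this

lemma vv_sub (n p a b : ℕ) (hab : a ≤ b) (hb : b ≤ n-1) :
    vv n p a - vv n p b = ((∑ u ∈ Finset.Ico a b, Bz n p u : ℤ) : ℝ) / (Dz n : ℝ) := by
  rw [vv, vv, div_sub_div_same, ← Finset.sum_Ico_consecutive (fun u => Bz n p u) hab hb]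
  push_cast
  ring_nf

lemma sumIco1 (f : ℕ → ℤ) (a : ℕ) : ∑ u ∈ Finset.Ico a (a+1), f u = f a := by
  rw [Finset.sum_Ico_succ_top (le_refl a), Finset.Ico_self, Finset.sum_empty, zero_add]

lemma sumIco2 (f : ℕ → ℤ) (a : ℕ) : ∑ u ∈ Finset.Ico a (a+2), f u = f a + f (a+1) := by
  rw [show a+2 = (a+1)+1 from rfl, Finset.sum_Ico_succ_top (by omega), sumIco1]


lemma vv_sub1 (n p a : ℕ) (h : a + 1 ≤ n-1) :
    vv n p a - vv n p (a+1) = ((Bz n p a : ℤ) : ℝ) / (Dz n : ℝ) := by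
  rw [vv_sub n p a (a+1) (by omega) h, sumIco1]

lemma vv_sub2 (n p a : ℕ) (h : a + 2 ≤ n-1) :
    vv n p a - vv n p (a+2) = (((Bz n p a + Bz n p (a+1)) : ℤ) : ℝ) / (Dz n : ℝ) := by
  rw [vv_sub n p a (a+2) (by omega) h, sumIco2]

lemma wrap (n : ℕ) (hn : 3 ≤ n) (M : ℤ) (b : Prop) [Decidable b]
    (h : M = if b then Dz n else 0) : ((M : ℤ) : ℝ) / (Dz n : ℝ) = if b then 1 else 0 := by
  subst h
  split_ifs
  · exact div_self (Dz_pos n hn).ne'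
  · simp

lemma wrapE (n : ℕ) (hn : 3 ≤ n) (M : ℤ) (b : Prop) [Decidable b]
    (h : M = (if b then Dz n else 0) - Dz n) :
    ((M : ℤ) : ℝ) / (Dz n : ℝ) = (if b then 1 else 0) - 1 := by
  subst h
  have hD := Dz_pos n hn
  split_ifs
  · push_cast
    rw [sub_self, zero_div, sub_self]
  · push_cast
    rw [zero_sub, neg_div, div_self hD.ne']
    ring

lemma row_reduce (n : ℕ) (τ : ℕ) (g : ℕ → ℝ) (S : Finset ℕ)
    (hsub : S ⊆ Finset.range n)
    (hout : ∀ c, c < n → c ∉ S → ¬(τ ≠ c ∧ τ ≤ c+2 ∧ c ≤ τ+2))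
    (hin : ∀ c ∈ S, (τ ≠ c ∧ τ ≤ c+2 ∧ c ≤ τ+2)) :
    (∑ c ∈ Finset.range n, if (τ ≠ c ∧ τ ≤ c+2 ∧ c ≤ τ+2) then g τ - g c else 0)
      = ∑ c ∈ S, (g τ - g c) := by
  rw [← Finset.sum_subset hsub (fun x hx hxs => if_neg (hout x (Finset.mem_range.mp hx) hxs))]
  exact Finset.sum_congr rfl (fun c hc => if_pos (hin c hc))

lemma lap_eq (n p : ℕ) (hn : 3 ≤ n) (hp : p < n) :
    (lap (linear2Tree n)).mulVec (fun i : Fin n => vv n p i.val)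
      = esrc ⟨p, hp⟩ ⟨n-1, by omega⟩ := by
  funext t
  obtain ⟨τ, hτ⟩ := t
  rw [lap_apply_nat n (vv n p) ⟨τ, hτ⟩]
  simp only [esrc, Fin.mk.injEq]
  by_cases hE : τ = n-1
  · -- last row
    obtain ⟨ν, rfl⟩ : ∃ ν, n = ν + 3 := ⟨n-3, by omega⟩
    subst hE
    simp only [show ν+3-1 = ν+2 from by omega]
    rw [row_reduce (ν+3) (ν+2) (vv (ν+3) p) {ν, ν+1}
        (by intro x hx; simp only [Finset.mem_insert, Finset.mem_singleton] at hx
            simp only [Finset.mem_range]; omega)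
        (by intro c h1 h2; simp only [Finset.mem_insert, Finset.mem_singleton] at h2; omega)
        (by intro c hc; simp only [Finset.mem_insert, Finset.mem_singleton] at hc; omega)]
    rw [Finset.sum_insert (by simp only [Finset.mem_singleton]; omega), Finset.sum_singleton]
    have e1 : vv (ν+3) p (ν+2) - vv (ν+3) p ν
        = ((-(Bz (ν+3) p ν + Bz (ν+3) p (ν+1)) : ℤ) : ℝ) / (Dz (ν+3) : ℝ) := by
      rw [show vv (ν+3) p (ν+2) - vv (ν+3) p ν = -(vv (ν+3) p ν - vv (ν+3) p (ν+2)) from by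
            ring,
          vv_sub2 (ν+3) p ν (by omega)]
      push_cast; ring
    have e2 : vv (ν+3) p (ν+2) - vv (ν+3) p (ν+1)
        = ((-(Bz (ν+3) p (ν+1)) : ℤ) : ℝ) / (Dz (ν+3) : ℝ) := by
      rw [show vv (ν+3) p (ν+2) - vv (ν+3) p (ν+1)
            = -(vv (ν+3) p (ν+1) - vv (ν+3) p (ν+1+1)) from by norm_num,
          vv_sub1 (ν+3) p (ν+1) (by omega)]
      push_cast; ring
    rw [e1, e2, if_pos trivial]
    rw [← wrapE (ν+3) (by omega) _ _ (rowE ν p (by omega))]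
    push_cast
    ring
  by_cases h0 : τ = 0
  · subst h0
    rw [row_reduce n 0 (vv n p) {0+1, 0+2}
        (by intro x hx; simp only [Finset.mem_insert, Finset.mem_singleton] at hx
            simp only [Finset.mem_range]; omega)
        (by intro c h1 h2; simp only [Finset.mem_insert, Finset.mem_singleton] at h2; omega)
        (by intro c hc; simp only [Finset.mem_insert, Finset.mem_singleton] at hc; omega)]
    rw [Finset.sum_insert (by simp only [Finset.mem_singleton]; omega), Finset.sum_singleton]
    rw [vv_sub1 n p 0 (by omega), vv_sub2 n p 0 (by omega)]
    rw [if_neg (show ¬(0 = n-1) from by omega), sub_zero]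
    rw [← wrap n hn _ _ (rowA n p)]
    push_cast
    ring
  by_cases h1 : τ = 1
  · subst h1
    by_cases hn3 : n = 3
    · subst hn3
      rw [row_reduce 3 1 (vv 3 p) {0, 0+2}
          (by intro x hx; simp only [Finset.mem_insert, Finset.mem_singleton] at hx
              simp only [Finset.mem_range]; omega)
          (by intro c hh1 h2; simp only [Finset.mem_insert, Finset.mem_singleton] at h2; omega)
          (by intro c hc; simp only [Finset.mem_insert, Finset.mem_singleton] at hc; omega)]
      rw [Finset.sum_insert (by simp only [Finset.mem_singleton]; omega), Finset.sum_singleton]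
      have e1 : vv 3 p 1 - vv 3 p 0 = ((-(Bz 3 p 0) : ℤ) : ℝ) / (Dz 3 : ℝ) := by
        rw [show vv 3 p 1 - vv 3 p 0 = -(vv 3 p 0 - vv 3 p (0+1)) from by norm_num,
            vv_sub1 3 p 0 (by omega)]
        push_cast; ring
      have e2 : vv 3 p 1 - vv 3 p (0+2) = ((Bz 3 p 1 : ℤ) : ℝ) / (Dz 3 : ℝ) := by
        rw [show vv 3 p 1 - vv 3 p (0+2) = vv 3 p 1 - vv 3 p (1+1) from by norm_num,
            vv_sub1 3 p 1 (by omega)]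
      rw [e1, e2, if_neg (show ¬((1:ℕ) = 3-1) from by omega), sub_zero]
      rw [← wrap 3 (by omega) _ _ (rowB2 p (by omega))]
      push_cast
      ring
    · rw [row_reduce n 1 (vv n p) {0, 0+2, 0+3}
          (by intro x hx; simp only [Finset.mem_insert, Finset.mem_singleton] at hx
              simp only [Finset.mem_range]; omega)
          (by intro c hh1 h2; simp only [Finset.mem_insert, Finset.mem_singleton] at h2; omega)
          (by intro c hc; simp only [Finset.mem_insert, Finset.mem_singleton] at hc; omega)]
      rw [Finset.sum_insert (by simp only [Finset.mem_insert, Finset.mem_singleton]; omega),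
          Finset.sum_insert (by simp only [Finset.mem_singleton]; omega), Finset.sum_singleton]
      have e1 : vv n p 1 - vv n p 0 = ((-(Bz n p 0) : ℤ) : ℝ) / (Dz n : ℝ) := by
        rw [show vv n p 1 - vv n p 0 = -(vv n p 0 - vv n p (0+1)) from by norm_num,
            vv_sub1 n p 0 (by omega)]
        push_cast; ring
      have e2 : vv n p 1 - vv n p (0+2) = ((Bz n p 1 : ℤ) : ℝ) / (Dz n : ℝ) := by
        rw [show vv n p 1 - vv n p (0+2) = vv n p 1 - vv n p (1+1) from by norm_num,
            vv_sub1 n p 1 (by omega)]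
      have e3 : vv n p 1 - vv n p (0+3) = (((Bz n p 1 + Bz n p 2) : ℤ) : ℝ) / (Dz n : ℝ) := by
        rw [show vv n p 1 - vv n p (0+3) = vv n p 1 - vv n p (1+2) from by norm_num,
            vv_sub2 n p 1 (by omega)]
      rw [e1, e2, e3, if_neg (show ¬((1:ℕ) = n-1) from by omega), sub_zero]
      rw [← wrap n hn _ _ (rowB1 n p)]
      push_cast
      ring
  by_cases hD2 : τ = n-2
  · obtain ⟨ν, rfl⟩ : ∃ ν, n = ν + 4 := ⟨n-4, by omega⟩
    subst hD2
    simp only [show ν+4-2 = ν+2 from by omega, show ν+4-1 = ν+3 from by omega]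
    rw [row_reduce (ν+4) (ν+2) (vv (ν+4) p) {ν, ν+1, ν+3}
        (by intro x hx; simp only [Finset.mem_insert, Finset.mem_singleton] at hx
            simp only [Finset.mem_range]; omega)
        (by intro c hh1 h2; simp only [Finset.mem_insert, Finset.mem_singleton] at h2; omega)
        (by intro c hc; simp only [Finset.mem_insert, Finset.mem_singleton] at hc; omega)]
    rw [Finset.sum_insert (by simp only [Finset.mem_insert, Finset.mem_singleton]; omega),
        Finset.sum_insert (by simp only [Finset.mem_singleton]; omega), Finset.sum_singleton]
    have e1 : vv (ν+4) p (ν+2) - vv (ν+4) p ν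
        = ((-(Bz (ν+4) p ν + Bz (ν+4) p (ν+1)) : ℤ) : ℝ) / (Dz (ν+4) : ℝ) := by
      rw [show vv (ν+4) p (ν+2) - vv (ν+4) p ν = -(vv (ν+4) p ν - vv (ν+4) p (ν+2)) from by
            ring,
          vv_sub2 (ν+4) p ν (by omega)]
      push_cast; ring
    have e2 : vv (ν+4) p (ν+2) - vv (ν+4) p (ν+1)
        = ((-(Bz (ν+4) p (ν+1)) : ℤ) : ℝ) / (Dz (ν+4) : ℝ) := by
      rw [show vv (ν+4) p (ν+2) - vv (ν+4) p (ν+1)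
            = -(vv (ν+4) p (ν+1) - vv (ν+4) p (ν+1+1)) from by norm_num,
          vv_sub1 (ν+4) p (ν+1) (by omega)]
      push_cast; ring
    have e3 : vv (ν+4) p (ν+2) - vv (ν+4) p (ν+3)
        = ((Bz (ν+4) p (ν+2) : ℤ) : ℝ) / (Dz (ν+4) : ℝ) := by
      rw [show vv (ν+4) p (ν+2) - vv (ν+4) p (ν+3)
            = vv (ν+4) p (ν+2) - vv (ν+4) p (ν+2+1) from by norm_num,
          vv_sub1 (ν+4) p (ν+2) (by omega)]
    rw [e1, e2, e3, if_neg (show ¬(ν+2 = ν+3) from by omega), sub_zero]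
    rw [← wrap (ν+4) (by omega) _ _ (rowD ν p (by omega))]
    push_cast
    ring
  · -- interior
    obtain ⟨t', rfl⟩ : ∃ t', τ = t' + 2 := ⟨τ-2, by omega⟩
    rw [row_reduce n (t'+2) (vv n p) {t', t'+1, t'+3, t'+4}
        (by intro x hx; simp only [Finset.mem_insert, Finset.mem_singleton] at hx
            simp only [Finset.mem_range]; omega)
        (by intro c hh1 h2; simp only [Finset.mem_insert, Finset.mem_singleton] at h2; omega)
        (by intro c hc; simp only [Finset.mem_insert, Finset.mem_singleton] at hc; omega)]
    rw [Finset.sum_insert (by simp only [Finset.mem_insert, Finset.mem_singleton]; omega),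
        Finset.sum_insert (by simp only [Finset.mem_insert, Finset.mem_singleton]; omega),
        Finset.sum_insert (by simp only [Finset.mem_singleton]; omega), Finset.sum_singleton]
    have e1 : vv n p (t'+2) - vv n p t'
        = ((-(Bz n p t' + Bz n p (t'+1)) : ℤ) : ℝ) / (Dz n : ℝ) := by
      rw [show vv n p (t'+2) - vv n p t' = -(vv n p t' - vv n p (t'+2)) from by ring,
          vv_sub2 n p t' (by omega)]
      push_cast; ring
    have e2 : vv n p (t'+2) - vv n p (t'+1)
        = ((-(Bz n p (t'+1)) : ℤ) : ℝ) / (Dz n : ℝ) := by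
      rw [show vv n p (t'+2) - vv n p (t'+1) = -(vv n p (t'+1) - vv n p (t'+1+1)) from by
            norm_num,
          vv_sub1 n p (t'+1) (by omega)]
      push_cast; ring
    have e3 : vv n p (t'+2) - vv n p (t'+3)
        = ((Bz n p (t'+2) : ℤ) : ℝ) / (Dz n : ℝ) := by
      rw [show vv n p (t'+2) - vv n p (t'+3) = vv n p (t'+2) - vv n p (t'+2+1) from by norm_num,
          vv_sub1 n p (t'+2) (by omega)]
    have e4 : vv n p (t'+2) - vv n p (t'+4)
        = (((Bz n p (t'+2) + Bz n p (t'+3)) : ℤ) : ℝ) / (Dz n : ℝ) := by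
      rw [show vv n p (t'+2) - vv n p (t'+4) = vv n p (t'+2) - vv n p (t'+2+2) from by norm_num,
          vv_sub2 n p (t'+2) (by omega)]
    rw [e1, e2, e3, e4, if_neg (show ¬(t'+2 = n-1) from by omega), sub_zero]
    rw [← wrap n hn _ _ (rowC n p t' (by omega))]
    push_cast
    ring


lemma fib2add1 (c : ℕ) : (Nat.fib (2*c+1) : ℤ) = (Nat.fib (c+1):ℤ)^2 + (Nat.fib c:ℤ)^2 := by
  exact_mod_cast Nat.fib_two_mul_add_one c

lemma sumfib (a b : ℕ) (hab : a ≤ b) :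
    ∑ u ∈ Finset.Ico a b, ((-1:ℤ)^u * Nat.fib (2*u+1))
      = (-1)^(b+1)*(Nat.fib b:ℤ)^2 - (-1)^(a+1)*(Nat.fib a:ℤ)^2 := by
  induction b, hab using Nat.le_induction with
  | base => simp
  | succ b hab ih =>
    rw [Finset.sum_Ico_succ_top hab, ih]
    linear_combination ((-1:ℤ)^b) * fib2add1 b

lemma Bz_diff (n q u c' : ℕ) (hu : u < q) (hc : n-1-q = c'+1) :
    Bz n q u - Bz n (q+1) u = (-1)^(u+q) * (Nat.fib (2*c'+1) : ℤ) * Nat.fib (2*u+1) := by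
  rw [Bz_lt n q u (c'+1) (2*u+1) (u+q) hu hc rfl rfl,
      Bz_lt n (q+1) u c' (2*u+1) (u+q+1) (by omega) (by omega) rfl (by ring)]
  linear_combination (-((-1:ℤ)^(u+q) * (Nat.fib (2*u+1):ℤ))) * fib2add1 c'

lemma Tlemma (A B C : ℕ) :
    (∑ u ∈ Finset.Ico A (A+B+1), (Bz (A+B+C+3) (A+B+1) u - Bz (A+B+C+3) (A+B+2) u))
      + Bz (A+B+C+3) A (A+B+1) - Bz (A+B+C+3) (A+B+2) (A+B+1)
    = ((Nat.fib (B+2):ℤ) * Nat.fib (2*A+B+2) - (Nat.fib (B+1):ℤ) * Nat.fib (2*A+B+1))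
        * Nat.fib (2*C+1) := by
  have hdiff : ∀ u ∈ Finset.Ico A (A+B+1),
      Bz (A+B+C+3) (A+B+1) u - Bz (A+B+C+3) (A+B+2) u
        = ((-1:ℤ)^(A+B+1) * Nat.fib (2*C+1)) * ((-1)^u * Nat.fib (2*u+1)) := by
    intro u hu
    have h := Bz_diff (A+B+C+3) (A+B+1) u C (Finset.mem_Ico.mp hu).2 (by omega)
    rw [show A+B+1+1 = A+B+2 from rfl] at h
    rw [h, pow_add]
    ring
  have hsum : (∑ u ∈ Finset.Ico A (A+B+1), (Bz (A+B+C+3) (A+B+1) u - Bz (A+B+C+3) (A+B+2) u))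
      = ((-1:ℤ)^(A+B+1) * Nat.fib (2*C+1))
          * ((-1)^(A+B+1+1)*(Nat.fib (A+B+1):ℤ)^2 - (-1)^(A+1)*(Nat.fib A:ℤ)^2) := by
    rw [Finset.sum_congr rfl hdiff, ← Finset.mul_sum, sumfib A (A+B+1) (by omega)]
  rw [hsum,
      Bz_ge (A+B+C+3) A (A+B+1) (B+C+2) (2*A+2*B+3) (2*A+(B+1)) (B+1)
        (by omega) (by omega) (by ring) (by ring) (by omega),
      Bz_lt (A+B+C+3) (A+B+2) (A+B+1) C (2*A+2*B+3) (2*(A+B+1)+1)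
        (by omega) (by omega) (by ring) (by ring),
      powE A (B+1), powE (A+B+1) 1,
      Dz_eq (A+B+C+3) (2*A+2*B+2*C+4) (by omega)]
  simp only [show B+1+1 = B+2 from rfl]
  -- expansions
  have E13 : (Nat.fib (2*A+2*B+2*C+4) : ℤ)
      = Nat.fib (A+B+C+1) * Nat.fib (A+B+C+2) + Nat.fib (A+B+C+2) * Nat.fib (A+B+C+3) := by
    have h := Nat.fib_add (A+B+C+1) (A+B+C+2)
    rw [show A+B+C+1+(A+B+C+2)+1 = 2*A+2*B+2*C+4 from by ring,
        show A+B+C+1+1 = A+B+C+2 from rfl, show A+B+C+2+1 = A+B+C+3 from rfl] at h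
    exact_mod_cast h
  have E14 : (Nat.fib (A+B+C+3) : ℤ) = Nat.fib (A+B+C+1) + Nat.fib (A+B+C+2) :=
    fibcast (A+B+C+1)
  have E11 : (Nat.fib (A+B+C+1) : ℤ) = Nat.fib A * Nat.fib (B+C) + Nat.fib (A+1) * Nat.fib (B+C+1) := by
    have h := Nat.fib_add A (B+C)
    rw [show A+(B+C)+1 = A+B+C+1 from by ring, show B+C+1 = B+C+1 from rfl] at h
    exact_mod_cast h
  have E12 : (Nat.fib (A+B+C+2) : ℤ)
      = Nat.fib A * Nat.fib (B+C+1) + Nat.fib (A+1) * Nat.fib (B+C+2) := by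
    have h := Nat.fib_add A (B+C+1)
    rw [show A+(B+C+1)+1 = A+B+C+2 from by ring, show B+C+1+1 = B+C+2 from rfl] at h
    exact_mod_cast h
  have EBC : (Nat.fib (B+C) : ℤ) = Nat.fib (B+C+2) - Nat.fib (B+C+1) := by
    linear_combination -fibcast (B+C)
  have E9 : (Nat.fib (B+C+1) : ℤ) = Nat.fib B * Nat.fib C + Nat.fib (B+1) * Nat.fib (C+1) := by
    exact_mod_cast Nat.fib_add B C
  have E1 : (Nat.fib (B+C+2) : ℤ) = Nat.fib (B+1) * Nat.fib C + Nat.fib (B+2) * Nat.fib (C+1) := by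
    have h := Nat.fib_add (B+1) C
    rw [show B+1+C+1 = B+C+2 from by ring, show B+1+1 = B+2 from rfl] at h
    exact_mod_cast h
  have E4 : (Nat.fib (2*A+2*B+3) : ℤ) = (Nat.fib (A+B+2):ℤ)^2 + (Nat.fib (A+B+1):ℤ)^2 := by
    have h := fib2add1 (A+B+1)
    rw [show 2*(A+B+1)+1 = 2*A+2*B+3 from by ring, show A+B+1+1 = A+B+2 from rfl] at h
    exact h
  have E6 : (Nat.fib (2*A+B+2) : ℤ)
      = Nat.fib A * Nat.fib (A+B+1) + Nat.fib (A+1) * Nat.fib (A+B+2) := by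
    have h := Nat.fib_add A (A+B+1)
    rw [show A+(A+B+1)+1 = 2*A+B+2 from by ring, show A+B+1+1 = A+B+2 from rfl] at h
    exact_mod_cast h
  have E7 : (Nat.fib (2*A+B+1) : ℤ)
      = Nat.fib A * Nat.fib (A+B) + Nat.fib (A+1) * Nat.fib (A+B+1) := by
    have h := Nat.fib_add A (A+B)
    rw [show A+(A+B)+1 = 2*A+B+1 from by ring, show A+B+1 = A+B+1 from rfl] at h
    exact_mod_cast h
  have EAB : (Nat.fib (A+B) : ℤ) = Nat.fib (A+B+2) - Nat.fib (A+B+1) := by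
    linear_combination -fibcast (A+B)
  have E2 : (Nat.fib (A+B+1) : ℤ) = Nat.fib A * Nat.fib B + Nat.fib (A+1) * Nat.fib (B+1) := by
    exact_mod_cast Nat.fib_add A B
  have E3 : (Nat.fib (A+B+2) : ℤ) = Nat.fib A * Nat.fib (B+1) + Nat.fib (A+1) * Nat.fib (B+2) := by
    have h := Nat.fib_add A (B+1)
    rw [show A+(B+1)+1 = A+B+2 from by ring, show B+1+1 = B+2 from rfl] at h
    exact_mod_cast h
  have E5 : (Nat.fib (2*C+1) : ℤ) = (Nat.fib (C+1):ℤ)^2 + (Nat.fib C:ℤ)^2 := fib2add1 C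
  have EB : (Nat.fib B : ℤ) = Nat.fib (B+2) - Nat.fib (B+1) := by
    linear_combination -fibcast B
  rw [E13, E14, E11, E12, EBC, E9, E1, E4, E6, E7, EAB, E2, E3, E5, EB]
  have hX := cassini A
  have hY : (Nat.fib (B+2):ℤ)^2
      = Nat.fib (B+1) * Nat.fib (B+2) + (Nat.fib (B+1):ℤ)^2 - (-1)^B := by
    have h := cassini (B+1)
    rw [show B+1+1 = B+2 from rfl] at h
    linear_combination h
  have hZ := cassini C
  have ha : ((-1:ℤ)^A)^2 = 1 := by rw [← pow_mul, mul_comm, pow_mul]; norm_num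
  have hb : ((-1:ℤ)^B)^2 = 1 := by rw [← pow_mul, mul_comm, pow_mul]; norm_num
  set FA := (Nat.fib A : ℤ) with hFA
  set FA1 := (Nat.fib (A+1) : ℤ) with hFA1
  set FB1 := (Nat.fib (B+1) : ℤ) with hFB1
  set FB2 := (Nat.fib (B+2) : ℤ) with hFB2
  set FC := (Nat.fib C : ℤ) with hFC
  set FC1 := (Nat.fib (C+1) : ℤ) with hFC1
  set EA := (-1:ℤ)^A with hEA
  set EB' := (-1:ℤ)^B with hEB
  set EC := (-1:ℤ)^C with hEC
  linear_combination (- (1)*FB2^2*FC1^2 - (1)*FB2^4*FC1^2*EB' + (1)*FB1*FB2^3*FC1^2*EB' + (1)*FB1^2*FC1^2 - (1)*FB1^2*FC1^2*EA^2*EB'^2 + (2)*FB1^2*FC^2 - (1)*FB1^2*FC^2*EA^2*EB'^2 + (1)*FB1^2*FB2^2*FC1^2*EB' + (1)*FB1^2*FB2^2*FC^2*EB' - (1)*FB1^3*FB2*FC^2*EB' - (1)*FB1^4*FC^2*EB') * hX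
      + (- (1)*FC1^2*EA + (1)*FC1^2*EA*EB'^2 - (1)*FB2^2*FC1^2*EA*EB' + (1)*FB1^2*FC^2*EA*EB' - (1)*FA*FA1*FC1^2 + (1)*FA*FA1*FC1^2*EB'^2 - (1)*FA*FA1*FB2^2*FC1^2*EB' - (2)*FA*FA1*FB1*FB2*FC1^2*EB' + (2)*FA*FA1*FB1*FB2*FC^2*EB' - (1)*FA*FA1*FB1^2*FC^2*EB' - (2)*FA^2*FC1^2 + (2)*FA^2*FC1^2*EB'^2 - (1)*FA^2*FC1^2*EA^2*EB'^2 - (1)*FA^2*FC^2*EA^2*EB'^2 - (2)*FA^2*FB2^2*FC1^2*EB' + (1)*FA^2*FB1*FB2*FC1^2*EB' - (1)*FA^2*FB1*FB2*FC^2*EB' + (3)*FA^2*FB1^2*FC^2*EB') * hY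
      + ((1)*EA*EB' - (1)*EA*EB'^3 - (1)*FB1*FB2*EA + (1)*FB1*FB2*EA*EB'^2 + (1)*FB1^2*EA*EB'^2 - (1)*FB1^2*EA^3*EB'^2 + (1)*FA*FA1*EB' - (1)*FA*FA1*EB'^3 - (1)*FA*FA1*FB1*FB2 + (3)*FA*FA1*FB1*FB2*EB'^2 - (2)*FA*FA1*FB1*FB2*EA^2*EB'^2 - (2)*FA*FA1*FB1^2 + (1)*FA*FA1*FB1^2*EB'^2 + (1)*FA*FA1*FB1^2*EA^2*EB'^2 + (2)*FA^2*EB' - (2)*FA^2*EB'^3 - (1)*FA^2*EA^2*EB' + (1)*FA^2*EA^2*EB'^3 - (2)*FA^2*FB1*FB2 + (1)*FA^2*FB1*FB2*EB'^2 + (1)*FA^2*FB1*FB2*EA^2*EB'^2 + (1)*FA^2*FB1^2 + (2)*FA^2*FB1^2*EB'^2 - (3)*FA^2*FB1^2*EA^2*EB'^2) * hZ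
      + (- (1)*FB1^2*EA*EB'^2*EC - (1)*FB1^2*FC*FC1*EA*EB'^2 - (2)*FB1^2*FC^2*EA*EB'^2 - (2)*FA*FA1*FB1*FB2*EB'^2*EC - (2)*FA*FA1*FB1*FB2*FC*FC1*EB'^2 - (4)*FA*FA1*FB1*FB2*FC^2*EB'^2 + (1)*FA*FA1*FB1^2*EB'^2*EC + (1)*FA*FA1*FB1^2*FC*FC1*EB'^2 + (2)*FA*FA1*FB1^2*FC^2*EB'^2 - (1)*FA^2*EB'*EC + (1)*FA^2*EB'^3*EC - (1)*FA^2*FC*FC1*EB' + (1)*FA^2*FC*FC1*EB'^3 - (2)*FA^2*FC^2*EB' + (2)*FA^2*FC^2*EB'^3 + (1)*FA^2*FB1*FB2*EB'^2*EC + (1)*FA^2*FB1*FB2*FC*FC1*EB'^2 + (2)*FA^2*FB1*FB2*FC^2*EB'^2 - (3)*FA^2*FB1^2*EB'^2*EC - (3)*FA^2*FB1^2*FC*FC1*EB'^2 - (6)*FA^2*FB1^2*FC^2*EB'^2) * ha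
      + (- (1)*EA*EB'*EC - (1)*FC*FC1*EA*EB' - (1)*FC^2*EA*EB' + (1)*FB1*FB2*EA*EC + (1)*FB1*FB2*FC*FC1*EA + (1)*FB1*FB2*FC^2*EA - (2)*FB1^2*FC^2*EA - (1)*FA*FA1*EB'*EC - (1)*FA*FA1*FC*FC1*EB' - (1)*FA*FA1*FC^2*EB' + (1)*FA*FA1*FB1*FB2*EC + (1)*FA*FA1*FB1*FB2*FC*FC1 - (3)*FA*FA1*FB1*FB2*FC^2 + (2)*FA*FA1*FB1^2*EC + (2)*FA*FA1*FB1^2*FC*FC1 + (4)*FA*FA1*FB1^2*FC^2 - (1)*FA^2*EB'*EC - (1)*FA^2*FC*FC1*EB' + (2)*FA^2*FB1*FB2*EC + (2)*FA^2*FB1*FB2*FC*FC1 + (4)*FA^2*FB1*FB2*FC^2 - (1)*FA^2*FB1^2*EC - (1)*FA^2*FB1^2*FC*FC1 - (7)*FA^2*FB1^2*FC^2) * hb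


lemma fibZ_coe' (x : ℕ) : (if (0:ℤ) ≤ (x:ℤ) then ((Nat.fib (x:ℤ).toNat : ℕ) : ℤ)
    else (-1) ^ ((-(x:ℤ)).toNat + 1) * (Nat.fib (-(x:ℤ)).toNat : ℤ)) = (Nat.fib x : ℤ) := by
  rw [if_pos (Int.natCast_nonneg x), Int.toNat_natCast]


-- appended after work.lean content (with fibZ available)
lemma fibZ_coe (x : ℕ) : fibZ (x : ℤ) = (Nat.fib x : ℤ) := by
  rw [fibZ, if_pos (Int.natCast_nonneg x), Int.toNat_natCast]

theorem stmt10' (n : ℕ) (hn : 3 ≤ n) (m : ℤ) (hm : m = (n : ℤ) - 2)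
    (j k : ℕ) (hj : 1 ≤ j) (hk : 1 ≤ k) (hjk : j + k + 1 ≤ n)
    (r₁ r₂ : ℝ)
    (h₁ : IsResistance (linear2Tree n) ⟨j - 1, by have := hj; omega⟩ ⟨j + k - 1, by have := hj; omega⟩ r₁)
    (h₂ : IsResistance (linear2Tree n) ⟨j - 1, by have := hj; omega⟩ ⟨j + k, by have := hj; omega⟩ r₂) :
    r₂ - r₁ =
      (((fibZ (k + 1) * fibZ (2 * j + k - 1) - fibZ k * fibZ (2 * j + k - 2)) *
          fibZ (2 * m - 2 * j - 2 * k + 3) : ℤ) : ℝ) / (fibZ (2 * m + 2) : ℝ) := by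
  subst hm
  obtain ⟨A, rfl⟩ : ∃ A, j = A + 1 := ⟨j-1, by omega⟩
  obtain ⟨B, rfl⟩ : ∃ B, k = B + 1 := ⟨k-1, by omega⟩
  obtain ⟨C, rfl⟩ : ∃ C, n = A+B+C+3 := ⟨n-A-B-3, by omega⟩
  simp only [show A+1-1 = A from by omega, show A+1+(B+1)-1 = A+B+1 from by omega,
    show A+1+(B+1) = A+B+2 from by omega] at h₁ h₂
  -- the two solution vectors
  have hl₁ : (lap (linear2Tree (A+B+C+3))).mulVec
      (fun t : Fin (A+B+C+3) => vv (A+B+C+3) A t.val - vv (A+B+C+3) (A+B+1) t.val)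
      = esrc ⟨A, by omega⟩ ⟨A+B+1, by omega⟩ := by
    have hsplit : (fun t : Fin (A+B+C+3) =>
        vv (A+B+C+3) A t.val - vv (A+B+C+3) (A+B+1) t.val)
        = (fun t : Fin (A+B+C+3) => vv (A+B+C+3) A t.val)
          - (fun t : Fin (A+B+C+3) => vv (A+B+C+3) (A+B+1) t.val) := rfl
    rw [hsplit, Matrix.mulVec_sub, lap_eq (A+B+C+3) A (by omega) (by omega),
        lap_eq (A+B+C+3) (A+B+1) (by omega) (by omega)]
    funext s
    simp only [Pi.sub_apply, esrc]
    ring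
  have hl₂ : (lap (linear2Tree (A+B+C+3))).mulVec
      (fun t : Fin (A+B+C+3) => vv (A+B+C+3) A t.val - vv (A+B+C+3) (A+B+2) t.val)
      = esrc ⟨A, by omega⟩ ⟨A+B+2, by omega⟩ := by
    have hsplit : (fun t : Fin (A+B+C+3) =>
        vv (A+B+C+3) A t.val - vv (A+B+C+3) (A+B+2) t.val)
        = (fun t : Fin (A+B+C+3) => vv (A+B+C+3) A t.val)
          - (fun t : Fin (A+B+C+3) => vv (A+B+C+3) (A+B+2) t.val) := rfl
    rw [hsplit, Matrix.mulVec_sub, lap_eq (A+B+C+3) A (by omega) (by omega),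
        lap_eq (A+B+C+3) (A+B+2) (by omega) (by omega)]
    funext s
    simp only [Pi.sub_apply, esrc]
    ring
  have hr₁ : r₁ = (vv (A+B+C+3) A A - vv (A+B+C+3) (A+B+1) A)
      - (vv (A+B+C+3) A (A+B+1) - vv (A+B+C+3) (A+B+1) (A+B+1)) :=
    h₁.2 _ hl₁
  have hr₂ : r₂ = (vv (A+B+C+3) A A - vv (A+B+C+3) (A+B+2) A)
      - (vv (A+B+C+3) A (A+B+2) - vv (A+B+C+3) (A+B+2) (A+B+2)) :=
    h₂.2 _ hl₂
  -- the integer key identity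
  have e3 : (∑ u ∈ Finset.Ico A (A+B+C+2), Bz (A+B+C+3) (A+B+1) u)
      - (∑ u ∈ Finset.Ico A (A+B+C+2), Bz (A+B+C+3) (A+B+2) u)
      = (∑ u ∈ Finset.Ico A (A+B+1),
          (Bz (A+B+C+3) (A+B+1) u - Bz (A+B+C+3) (A+B+2) u))
        + ((∑ u ∈ Finset.Ico (A+B+1) (A+B+C+2), Bz (A+B+C+3) (A+B+1) u)
          - (∑ u ∈ Finset.Ico (A+B+1) (A+B+C+2), Bz (A+B+C+3) (A+B+2) u)) := by
    rw [← Finset.sum_Ico_consecutive (fun u => Bz (A+B+C+3) (A+B+1) u)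
          (show A ≤ A+B+1 by omega) (show A+B+1 ≤ A+B+C+2 by omega),
        ← Finset.sum_Ico_consecutive (fun u => Bz (A+B+C+3) (A+B+2) u)
          (show A ≤ A+B+1 by omega) (show A+B+1 ≤ A+B+C+2 by omega),
        Finset.sum_sub_distrib]
    ring
  have e1 : (∑ u ∈ Finset.Ico (A+B+1) (A+B+C+2), Bz (A+B+C+3) A u)
      = Bz (A+B+C+3) A (A+B+1) + ∑ u ∈ Finset.Ico (A+B+2) (A+B+C+2), Bz (A+B+C+3) A u := by
    have h := Finset.sum_eq_sum_Ico_succ_bot (show A+B+1 < A+B+C+2 by omega)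
      (Bz (A+B+C+3) A)
    rw [show A+B+1+1 = A+B+2 from rfl] at h
    exact h
  have f2 : (∑ u ∈ Finset.Ico (A+B+1) (A+B+C+2), Bz (A+B+C+3) (A+B+2) u)
      = Bz (A+B+C+3) (A+B+2) (A+B+1)
        + ∑ u ∈ Finset.Ico (A+B+2) (A+B+C+2), Bz (A+B+C+3) (A+B+2) u := by
    have h := Finset.sum_eq_sum_Ico_succ_bot (show A+B+1 < A+B+C+2 by omega)
      (Bz (A+B+C+3) (A+B+2))
    rw [show A+B+1+1 = A+B+2 from rfl] at h
    exact h
  have key : ((∑ u ∈ Finset.Ico A (A+B+C+2), Bz (A+B+C+3) (A+B+1) u)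
        - (∑ u ∈ Finset.Ico A (A+B+C+2), Bz (A+B+C+3) (A+B+2) u))
      + ((∑ u ∈ Finset.Ico (A+B+1) (A+B+C+2), Bz (A+B+C+3) A u)
        - (∑ u ∈ Finset.Ico (A+B+2) (A+B+C+2), Bz (A+B+C+3) A u))
      + ((∑ u ∈ Finset.Ico (A+B+2) (A+B+C+2), Bz (A+B+C+3) (A+B+2) u)
        - (∑ u ∈ Finset.Ico (A+B+1) (A+B+C+2), Bz (A+B+C+3) (A+B+1) u))
      = ((Nat.fib (B+2):ℤ) * Nat.fib (2*A+B+2) - (Nat.fib (B+1):ℤ) * Nat.fib (2*A+B+1))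
          * Nat.fib (2*C+1) := by
    linear_combination e3 + e1 - f2 + Tlemma A B C
  -- rewrite the fibZ's
  rw [show ((↑(B+1) + 1 : ℤ)) = ((B+2 : ℕ) : ℤ) from by push_cast; ring,
      show (2 * ↑(A+1) + ↑(B+1) - 1 : ℤ) = ((2*A+B+2 : ℕ) : ℤ) from by push_cast; ring,
      show (2 * ↑(A+1) + ↑(B+1) - 2 : ℤ) = ((2*A+B+1 : ℕ) : ℤ) from by push_cast; ring,
      show (2 * ((A+B+C+3 : ℕ) - 2) - 2 * ↑(A+1) - 2 * ↑(B+1) + 3 : ℤ)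
        = ((2*C+1 : ℕ) : ℤ) from by push_cast; ring,
      show (2 * ((A+B+C+3 : ℕ) - 2) + 2 : ℤ) = ((2*A+2*B+2*C+4 : ℕ) : ℤ) from by
        push_cast; ring,
      fibZ_coe, fibZ_coe, fibZ_coe, fibZ_coe, fibZ_coe, fibZ_coe]
  have hDpos : (0:ℝ) < ((Nat.fib (2*A+2*B+2*C+4) : ℤ) : ℝ) := by
    have : 0 < Nat.fib (2*A+2*B+2*C+4) := Nat.fib_pos.mpr (by omega)
    exact_mod_cast this
  have hDz : Dz (A+B+C+3) = (Nat.fib (2*A+2*B+2*C+4) : ℤ) := Dz_eq _ _ (by omega)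
  rw [hr₂, hr₁]
  simp only [vv, hDz, show A+B+C+3-1 = A+B+C+2 from by omega]
  rw [div_sub_div_same, div_sub_div_same, ← key]
  push_cast
  field_simp
  ring


end Stmt10

/-- For the straight linear 2-tree on `n ≥ 3` vertices with `m = n - 2`,
if `1 ≤ j`, `1 ≤ k` and `j + k + 1 ≤ n`, then
`r(j, j+k+1) - r(j, j+k) = (F_{k+1} F_{2j+k-1} - F_k F_{2j+k-2}) F_{2m-2j-2k+3} / F_{2m+2}`. -/
theorem stmt10 (n : ℕ) (hn : 3 ≤ n) (m : ℤ) (hm : m = (n : ℤ) - 2)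
    (j k : ℕ) (hj : 1 ≤ j) (hk : 1 ≤ k) (hjk : j + k + 1 ≤ n)
    (r₁ r₂ : ℝ)
    (h₁ : IsResistance (linear2Tree n) ⟨j - 1, by omega⟩ ⟨j + k - 1, by omega⟩ r₁)
    (h₂ : IsResistance (linear2Tree n) ⟨j - 1, by omega⟩ ⟨j + k, by omega⟩ r₂) :
    r₂ - r₁ =
      (((fibZ (k + 1) * fibZ (2 * j + k - 1) - fibZ k * fibZ (2 * j + k - 2)) *
          fibZ (2 * m - 2 * j - 2 * k + 3) : ℤ) : ℝ) / (fibZ (2 * m + 2) : ℝ) := by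
  exact Stmt10.stmt10' n hn m hm j k hj hk hjk r₁ r₂ h₁ h₂
end

section
/- Let n ≥ 3, let G_n be the straight linear 2-tree on n vertices, and let m = n − 2 (the number of triangles of G_n). Then the number of spanning trees of G_n equals F_{2m+2}. -/
namespace St11
open SimpleGraph

variable {j : ℕ}

/-- second-to-last vertex of `Fin (j+2)` viewed abstractly: value `j+1` (the last). -/
def av (j : ℕ) : Fin (j+2) := ⟨j+1, by omega⟩
def bv (j : ℕ) : Fin (j+2) := ⟨j, by omega⟩
def lv (j : ℕ) : Fin (j+3) := ⟨j+2, by omega⟩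
def cst (u : Fin (j+2)) : Fin (j+3) := ⟨u.val, by omega⟩

lemma cst_inj {u v : Fin (j+2)} (h : cst u = cst v) : u = v := by
  apply Fin.ext
  have h2 : (cst u).val = (cst v).val := by rw [h]
  exact h2

lemma cst_ne_lv (u : Fin (j+2)) : cst u ≠ lv j := by
  intro h
  have := congrArg Fin.val h
  simp [cst, lv] at this
  omega

lemma av_ne_bv : av j ≠ bv j := by
  intro h; have := congrArg Fin.val h; simp [av, bv] at this

lemma vertex_cases (x : Fin (j+3)) : (∃ u : Fin (j+2), x = cst u) ∨ x = lv j := by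
  rcases Nat.lt_or_ge x.val (j+2) with h | h
  · exact Or.inl ⟨⟨x.val, h⟩, Fin.ext rfl⟩
  · right; apply Fin.ext; have := x.isLt; simp [lv]; omega

def ext (G : SimpleGraph (Fin (j+2))) (d₁ d₂ : Bool) : SimpleGraph (Fin (j+3)) where
  Adj x y := (∃ (hx : x.val < j+2) (hy : y.val < j+2), G.Adj ⟨x.val, hx⟩ ⟨y.val, hy⟩)
    ∨ (x.val = j+2 ∧ y.val = j+1 ∧ d₂ = true) ∨ (y.val = j+2 ∧ x.val = j+1 ∧ d₂ = true)
    ∨ (x.val = j+2 ∧ y.val = j ∧ d₁ = true) ∨ (y.val = j+2 ∧ x.val = j ∧ d₁ = true)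
  symm := by
    constructor
    intro x y h
    rcases h with ⟨hx, hy, h⟩ | h | h | h | h
    · exact Or.inl ⟨hy, hx, h.symm⟩
    · exact Or.inr (Or.inr (Or.inl h))
    · exact Or.inr (Or.inl h)
    · exact Or.inr (Or.inr (Or.inr (Or.inr h)))
    · exact Or.inr (Or.inr (Or.inr (Or.inl h)))
  loopless := by
    constructor
    intro x h
    rcases h with ⟨hx, hy, h⟩ | h | h | h | h
    · exact G.loopless.irrefl _ h
    all_goals omega

variable {G : SimpleGraph (Fin (j+2))} {d₁ d₂ : Bool}

lemma ext_adj_cst {u v : Fin (j+2)} : (ext G d₁ d₂).Adj (cst u) (cst v) ↔ G.Adj u v := by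
  constructor
  · rintro (⟨hx, hy, h⟩ | h | h | h | h)
    · have hu : (⟨(cst u).val, hx⟩ : Fin (j+2)) = u := Fin.ext rfl
      have hv : (⟨(cst v).val, hy⟩ : Fin (j+2)) = v := Fin.ext rfl
      rwa [hu, hv] at h
    all_goals (exfalso; have := u.isLt; have := v.isLt; simp [cst] at h; omega)
  · intro h
    exact Or.inl ⟨u.isLt, v.isLt, h⟩

lemma ext_adj_lv {y : Fin (j+3)} :
    (ext G d₁ d₂).Adj (lv j) y ↔ (y = cst (av j) ∧ d₂ = true) ∨ (y = cst (bv j) ∧ d₁ = true) := by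
  have hl : (lv j).val = j+2 := rfl
  constructor
  · rintro (⟨hx, hy, h⟩ | h | h | h | h)
    · exfalso; omega
    · exact Or.inl ⟨Fin.ext (by simp [cst, av]; omega), h.2.2⟩
    · exfalso; obtain ⟨h1, h2, h3⟩ := h; omega
    · exact Or.inr ⟨Fin.ext (by simp [cst, bv]; omega), h.2.2⟩
    · exfalso; obtain ⟨h1, h2, h3⟩ := h; omega
  · rintro (⟨rfl, h⟩ | ⟨rfl, h⟩)
    · exact Or.inr (Or.inl ⟨rfl, by simp [cst, av], h⟩)
    · exact Or.inr (Or.inr (Or.inr (Or.inl ⟨rfl, by simp [cst, bv], h⟩)))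

lemma ext_adj_cst_lv {u : Fin (j+2)} :
    (ext G d₁ d₂).Adj (cst u) (lv j) ↔ (u = av j ∧ d₂ = true) ∨ (u = bv j ∧ d₁ = true) := by
  rw [adj_comm, ext_adj_lv]
  constructor
  · rintro (⟨h, h2⟩ | ⟨h, h2⟩)
    · exact Or.inl ⟨cst_inj h, h2⟩
    · exact Or.inr ⟨cst_inj h, h2⟩
  · rintro (⟨rfl, h2⟩ | ⟨rfl, h2⟩)
    · exact Or.inl ⟨rfl, h2⟩
    · exact Or.inr ⟨rfl, h2⟩


def extHom (G : SimpleGraph (Fin (j+2))) (d₁ d₂ : Bool) : G →g ext G d₁ d₂ where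
  toFun := cst
  map_rel' := fun h => ext_adj_cst.mpr h

lemma reach_lift {u v : Fin (j+2)} (h : G.Reachable u v) :
    (ext G d₁ d₂).Reachable (cst u) (cst v) := h.map (extHom G d₁ d₂)

/-- reachability in `G` augmented (when both flags are on) by the virtual edge `av–bv`. -/
def Rch (G : SimpleGraph (Fin (j+2))) (d₁ d₂ : Bool) (u v : Fin (j+2)) : Prop :=
  G.Reachable u v ∨ (d₁ = true ∧ d₂ = true ∧
    ((G.Reachable u (av j) ∧ G.Reachable (bv j) v) ∨
     (G.Reachable u (bv j) ∧ G.Reachable (av j) v)))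

lemma Rch.refl (u : Fin (j+2)) : Rch G d₁ d₂ u u := Or.inl (Reachable.refl u)

lemma rch_of_reach {u v : Fin (j+2)} (h : G.Reachable u v) : Rch G d₁ d₂ u v := Or.inl h

lemma rch_left {u w v : Fin (j+2)} (h : G.Reachable u w) (h2 : Rch G d₁ d₂ w v) :
    Rch G d₁ d₂ u v := by
  rcases h2 with h2 | ⟨e1, e2, ⟨r1, r2⟩ | ⟨r1, r2⟩⟩
  · exact Or.inl (h.trans h2)
  · exact Or.inr ⟨e1, e2, Or.inl ⟨h.trans r1, r2⟩⟩
  · exact Or.inr ⟨e1, e2, Or.inr ⟨h.trans r1, r2⟩⟩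

lemma rch_symm {u v : Fin (j+2)} (h : Rch G d₁ d₂ u v) : Rch G d₁ d₂ v u := by
  rcases h with h | ⟨e1, e2, ⟨r1, r2⟩ | ⟨r1, r2⟩⟩
  · exact Or.inl h.symm
  · exact Or.inr ⟨e1, e2, Or.inr ⟨r2.symm, r1.symm⟩⟩
  · exact Or.inr ⟨e1, e2, Or.inl ⟨r2.symm, r1.symm⟩⟩

/-- Passing through the extra vertex. -/
lemma rch_through {u v : Fin (j+2)}
    (h1 : (u = av j ∧ d₂ = true) ∨ (u = bv j ∧ d₁ = true))
    (h2 : (d₂ = true ∧ Rch G d₁ d₂ (av j) v) ∨ (d₁ = true ∧ Rch G d₁ d₂ (bv j) v)) :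
    Rch G d₁ d₂ u v := by
  rcases h1 with ⟨rfl, hd2⟩ | ⟨rfl, hd1⟩
  · rcases h2 with ⟨_, h⟩ | ⟨hd1, h⟩
    · exact h
    · rcases h with h | ⟨_, _, ⟨r1, r2⟩ | ⟨r1, r2⟩⟩
      · exact Or.inr ⟨hd1, hd2, Or.inl ⟨Reachable.refl _, h⟩⟩
      · exact Or.inl (r1.symm.trans r2)
      · exact Or.inl r2
  · rcases h2 with ⟨hd2, h⟩ | ⟨_, h⟩
    · rcases h with h | ⟨_, _, ⟨r1, r2⟩ | ⟨r1, r2⟩⟩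
      · exact Or.inr ⟨hd1, hd2, Or.inr ⟨Reachable.refl _, h⟩⟩
      · exact Or.inl r2
      · exact Or.inl (r1.symm.trans r2)
    · exact h

/-- Master projection lemma: walks in the extended graph project to `Rch` statements. -/
lemma walk_proj {x y : Fin (j+3)} (w : (ext G d₁ d₂).Walk x y) :
    (∀ u v, x = cst u → y = cst v → Rch G d₁ d₂ u v) ∧
    (∀ u, x = cst u → y = lv j →
      (d₂ = true ∧ Rch G d₁ d₂ u (av j)) ∨ (d₁ = true ∧ Rch G d₁ d₂ u (bv j))) ∧
    (∀ v, x = lv j → y = cst v →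
      (d₂ = true ∧ Rch G d₁ d₂ (av j) v) ∨ (d₁ = true ∧ Rch G d₁ d₂ (bv j) v)) := by
  induction w with
  | nil =>
    refine ⟨fun u v hu hv => ?_, fun u hu hl => ?_, fun v hl hv => ?_⟩
    · rw [hu] at hv; exact (cst_inj hv) ▸ Rch.refl u
    · rw [hu] at hl; exact absurd hl (cst_ne_lv u)
    · rw [hl] at hv; exact absurd hv.symm (cst_ne_lv v)
  | @cons x z y h w ih =>
    obtain ⟨ih1, ih2, ih3⟩ := ih
    rcases vertex_cases z with ⟨w', rfl⟩ | rfl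
    · -- z is an old vertex
      refine ⟨fun u v hu hv => ?_, fun u hu hl => ?_, fun v hl hv => ?_⟩
      · subst hu
        exact rch_left ((ext_adj_cst.mp h).reachable) (ih1 w' v rfl hv)
      · subst hu
        rcases ih2 w' rfl hl with ⟨hd, hr⟩ | ⟨hd, hr⟩
        · exact Or.inl ⟨hd, rch_left ((ext_adj_cst.mp h).reachable) hr⟩
        · exact Or.inr ⟨hd, rch_left ((ext_adj_cst.mp h).reachable) hr⟩
      · subst hl
        rcases ext_adj_lv.mp h with ⟨hw, hd⟩ | ⟨hw, hd⟩
        · exact Or.inl ⟨hd, (cst_inj hw) ▸ ih1 w' v rfl hv⟩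
        · exact Or.inr ⟨hd, (cst_inj hw) ▸ ih1 w' v rfl hv⟩
    · -- z is the new last vertex
      refine ⟨fun u v hu hv => ?_, fun u hu hl => ?_, fun v hl hv => ?_⟩
      · subst hu
        exact rch_through (ext_adj_cst_lv.mp h) (ih3 v rfl hv)
      · subst hu
        rcases ext_adj_cst_lv.mp h with ⟨rfl, hd⟩ | ⟨rfl, hd⟩
        · exact Or.inl ⟨hd, Rch.refl _⟩
        · exact Or.inr ⟨hd, Rch.refl _⟩
      · subst hl
        exact absurd h (ext G d₁ d₂).irrefl

lemma reach_cst_iff {u v : Fin (j+2)} :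
    (ext G d₁ d₂).Reachable (cst u) (cst v) ↔ Rch G d₁ d₂ u v := by
  constructor
  · rintro ⟨w⟩; exact (walk_proj w).1 u v rfl rfl
  · rintro (h | ⟨hd1, hd2, ⟨r1, r2⟩ | ⟨r1, r2⟩⟩)
    · exact reach_lift h
    · refine (reach_lift r1).trans (Reachable.trans ?_ (reach_lift r2))
      exact ((ext_adj_cst_lv.mpr (Or.inl ⟨rfl, hd2⟩)).reachable).trans
        ((ext_adj_lv.mpr (Or.inr ⟨rfl, hd1⟩)).reachable)
    · refine (reach_lift r1).trans (Reachable.trans ?_ (reach_lift r2))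
      exact ((ext_adj_cst_lv.mpr (Or.inr ⟨rfl, hd1⟩)).reachable).trans
        ((ext_adj_lv.mpr (Or.inl ⟨rfl, hd2⟩)).reachable)

lemma reach_lv_iff {u : Fin (j+2)} :
    (ext G d₁ d₂).Reachable (cst u) (lv j) ↔
      (d₂ = true ∧ Rch G d₁ d₂ u (av j)) ∨ (d₁ = true ∧ Rch G d₁ d₂ u (bv j)) := by
  constructor
  · rintro ⟨w⟩; exact (walk_proj w).2.1 u rfl rfl
  · rintro (⟨hd, hr⟩ | ⟨hd, hr⟩)
    · exact (reach_cst_iff.mpr hr).trans (ext_adj_cst_lv.mpr (Or.inl ⟨rfl, hd⟩)).reachable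
    · exact (reach_cst_iff.mpr hr).trans (ext_adj_cst_lv.mpr (Or.inr ⟨rfl, hd⟩)).reachable

lemma ext_connected_iff :
    (ext G d₁ d₂).Connected ↔ ∀ u : Fin (j+2),
      (d₂ = true ∧ Rch G d₁ d₂ u (av j)) ∨ (d₁ = true ∧ Rch G d₁ d₂ u (bv j)) := by
  constructor
  · intro h u
    exact reach_lv_iff.mp (h.preconnected (cst u) (lv j))
  · intro h
    rw [connected_iff]
    refine ⟨fun x y => ?_, ⟨lv j⟩⟩
    have key : ∀ x : Fin (j+3), (ext G d₁ d₂).Reachable x (lv j) := by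
      intro x
      rcases vertex_cases x with ⟨u, rfl⟩ | rfl
      · exact reach_lv_iff.mpr (h u)
      · exact Reachable.refl _
    exact (key x).trans (key y).symm

lemma sym2_cst_eq {p q u v : Fin (j+2)} :
    s(cst p, cst q) = s(cst u, cst v) ↔ s(p, q) = s(u, v) := by
  rw [Sym2.eq_iff, Sym2.eq_iff]
  constructor
  · rintro (⟨h1, h2⟩ | ⟨h1, h2⟩)
    · exact Or.inl ⟨cst_inj h1, cst_inj h2⟩
    · exact Or.inr ⟨cst_inj h1, cst_inj h2⟩
  · rintro (⟨rfl, rfl⟩ | ⟨rfl, rfl⟩)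
    · exact Or.inl ⟨rfl, rfl⟩
    · exact Or.inr ⟨rfl, rfl⟩

lemma sym2_cst_ne_lv {p u v : Fin (j+2)} {x : Fin (j+3)} :
    s(cst p, x) ≠ s(cst u, cst v) ∨ x ≠ lv j := by
  by_cases hx : x = lv j
  · subst hx
    left
    intro hc
    rw [Sym2.eq_iff] at hc
    rcases hc with ⟨h1, h2⟩ | ⟨h1, h2⟩
    · exact cst_ne_lv v h2.symm
    · exact cst_ne_lv u h2.symm
  · exact Or.inr hx

lemma del_cst_edge {u v : Fin (j+2)} :
    (ext G d₁ d₂) \ fromEdgeSet {s(cst u, cst v)} =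
      ext (G \ fromEdgeSet {s(u, v)}) d₁ d₂ := by
  ext x y
  rw [sdiff_adj, fromEdgeSet_adj, Set.mem_singleton_iff]
  rcases vertex_cases x with ⟨p, rfl⟩ | rfl <;> rcases vertex_cases y with ⟨q, rfl⟩ | rfl
  · rw [ext_adj_cst, ext_adj_cst, sdiff_adj, fromEdgeSet_adj, Set.mem_singleton_iff]
    constructor
    · rintro ⟨ha, hb⟩
      refine ⟨ha, ?_⟩
      rintro ⟨h1, h2⟩
      exact hb ⟨sym2_cst_eq.mpr h1, fun hc => h2 (cst_inj hc)⟩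
    · rintro ⟨ha, hb⟩
      refine ⟨ha, ?_⟩
      rintro ⟨h1, h2⟩
      exact hb ⟨sym2_cst_eq.mp h1, ha.ne⟩
  · rw [ext_adj_cst_lv, ext_adj_cst_lv]
    constructor
    · rintro ⟨ha, _⟩; exact ha
    · intro ha
      refine ⟨ha, ?_⟩
      rintro ⟨h1, _⟩
      rcases sym2_cst_ne_lv (p := p) (u := u) (v := v) (x := lv j) with h | h
      · exact h h1
      · exact h rfl
  · rw [adj_comm, ext_adj_cst_lv, adj_comm ((ext (G \ fromEdgeSet {s(u,v)}) d₁ d₂)), ext_adj_cst_lv]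
    constructor
    · rintro ⟨ha, _⟩; exact ha
    · intro ha
      refine ⟨ha, ?_⟩
      rintro ⟨h1, _⟩
      rw [Sym2.eq_swap] at h1
      rcases sym2_cst_ne_lv (p := q) (u := u) (v := v) (x := lv j) with h | h
      · exact h h1
      · exact h rfl
  · constructor
    · rintro ⟨ha, _⟩; exact absurd ha (ext _ _ _).irrefl
    · intro ha; exact absurd ha (ext _ _ _).irrefl

lemma sym2_lv_cst_eq {p u : Fin (j+2)} :
    s(lv j, cst p) = s(lv j, cst u) ↔ p = u := by
  rw [Sym2.eq_iff]
  constructor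
  · rintro (⟨h1, h2⟩ | ⟨h1, h2⟩)
    · exact cst_inj h2
    · exact absurd h2 (cst_ne_lv p)
  · rintro rfl; exact Or.inl ⟨rfl, rfl⟩

lemma del_lv_edge_av :
    (ext G d₁ d₂) \ fromEdgeSet {s(lv j, cst (av j))} = ext G d₁ false := by
  ext x y
  rw [sdiff_adj, fromEdgeSet_adj, Set.mem_singleton_iff]
  rcases vertex_cases x with ⟨p, rfl⟩ | rfl <;> rcases vertex_cases y with ⟨q, rfl⟩ | rfl
  · rw [ext_adj_cst, ext_adj_cst]
    constructor
    · rintro ⟨ha, _⟩; exact ha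
    · intro ha
      refine ⟨ha, ?_⟩
      rintro ⟨h1, _⟩
      rw [Sym2.eq_iff] at h1
      rcases h1 with ⟨h1, _⟩ | ⟨_, h2⟩
      · exact cst_ne_lv p h1
      · exact cst_ne_lv q h2
  · rw [ext_adj_cst_lv, ext_adj_cst_lv]
    constructor
    · rintro ⟨ha, hb⟩
      rcases ha with ⟨rfl, hd⟩ | ⟨rfl, hd⟩
      · exfalso
        apply hb
        refine ⟨by rw [Sym2.eq_swap], cst_ne_lv _⟩
      · exact Or.inr ⟨rfl, hd⟩
    · rintro (⟨rfl, hd⟩ | ⟨rfl, hd⟩)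
      · exact absurd hd (by simp)
      · refine ⟨Or.inr ⟨rfl, hd⟩, ?_⟩
        rintro ⟨h1, _⟩
        rw [Sym2.eq_swap] at h1
        exact av_ne_bv (sym2_lv_cst_eq.mp h1).symm
  · rw [adj_comm, ext_adj_cst_lv, adj_comm (ext G d₁ false), ext_adj_cst_lv]
    constructor
    · rintro ⟨ha, hb⟩
      rcases ha with ⟨rfl, hd⟩ | ⟨rfl, hd⟩
      · exfalso
        exact hb ⟨rfl, Ne.symm (cst_ne_lv _)⟩
      · exact Or.inr ⟨rfl, hd⟩
    · rintro (⟨rfl, hd⟩ | ⟨rfl, hd⟩)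
      · exact absurd hd (by simp)
      · refine ⟨Or.inr ⟨rfl, hd⟩, ?_⟩
        rintro ⟨h1, _⟩
        exact av_ne_bv (sym2_lv_cst_eq.mp h1).symm
  · constructor
    · rintro ⟨ha, _⟩; exact absurd ha (ext _ _ _).irrefl
    · intro ha; exact absurd ha (ext _ _ _).irrefl

lemma del_lv_edge_bv :
    (ext G d₁ d₂) \ fromEdgeSet {s(lv j, cst (bv j))} = ext G false d₂ := by
  ext x y
  rw [sdiff_adj, fromEdgeSet_adj, Set.mem_singleton_iff]
  rcases vertex_cases x with ⟨p, rfl⟩ | rfl <;> rcases vertex_cases y with ⟨q, rfl⟩ | rfl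
  · rw [ext_adj_cst, ext_adj_cst]
    constructor
    · rintro ⟨ha, _⟩; exact ha
    · intro ha
      refine ⟨ha, ?_⟩
      rintro ⟨h1, _⟩
      rw [Sym2.eq_iff] at h1
      rcases h1 with ⟨h1, _⟩ | ⟨_, h2⟩
      · exact cst_ne_lv p h1
      · exact cst_ne_lv q h2
  · rw [ext_adj_cst_lv, ext_adj_cst_lv]
    constructor
    · rintro ⟨ha, hb⟩
      rcases ha with ⟨rfl, hd⟩ | ⟨rfl, hd⟩
      · exact Or.inl ⟨rfl, hd⟩
      · exfalso
        exact hb ⟨by rw [Sym2.eq_swap], cst_ne_lv _⟩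
    · rintro (⟨rfl, hd⟩ | ⟨rfl, hd⟩)
      · refine ⟨Or.inl ⟨rfl, hd⟩, ?_⟩
        rintro ⟨h1, _⟩
        rw [Sym2.eq_swap] at h1
        exact av_ne_bv (sym2_lv_cst_eq.mp h1)
      · exact absurd hd (by simp)
  · rw [adj_comm, ext_adj_cst_lv, adj_comm (ext G false d₂), ext_adj_cst_lv]
    constructor
    · rintro ⟨ha, hb⟩
      rcases ha with ⟨rfl, hd⟩ | ⟨rfl, hd⟩
      · exact Or.inl ⟨rfl, hd⟩
      · exact absurd ⟨rfl, Ne.symm (cst_ne_lv _)⟩ hb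
    · rintro (⟨rfl, hd⟩ | ⟨rfl, hd⟩)
      · refine ⟨Or.inl ⟨rfl, hd⟩, ?_⟩
        rintro ⟨h1, _⟩
        exact av_ne_bv (sym2_lv_cst_eq.mp h1)
      · exact absurd hd (by simp)
  · constructor
    · rintro ⟨ha, _⟩; exact absurd ha (ext _ _ _).irrefl
    · intro ha; exact absurd ha (ext _ _ _).irrefl

lemma ext_acyclic_iff :
    (ext G d₁ d₂).IsAcyclic ↔
      G.IsAcyclic ∧ ¬(d₁ = true ∧ d₂ = true ∧ G.Reachable (av j) (bv j)) := by
  constructor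
  · intro h
    constructor
    · rw [isAcyclic_iff_forall_adj_isBridge]
      intro u v huv
      rw [isBridge_iff]
      refine fun hre => ?_
      have hb := (isAcyclic_iff_forall_adj_isBridge.mp h) (ext_adj_cst.mpr huv)
      rw [isBridge_iff, deleteEdges, del_cst_edge] at hb
      exact hb (reach_cst_iff.mpr (Or.inl hre))
    · rintro ⟨hd1, hd2, hr⟩
      have hadj : (ext G d₁ d₂).Adj (lv j) (cst (av j)) :=
        ext_adj_lv.mpr (Or.inl ⟨rfl, hd2⟩)
      have hb := (isAcyclic_iff_forall_adj_isBridge.mp h) hadj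
      rw [isBridge_iff, deleteEdges, del_lv_edge_av] at hb
      apply hb
      refine Reachable.symm ?_
      exact reach_lv_iff.mpr (Or.inr ⟨hd1, Or.inl hr⟩)
  · rintro ⟨hG, hnot⟩
    rw [isAcyclic_iff_forall_adj_isBridge]
    intro x y hxy
    rw [isBridge_iff]
    refine fun hre => ?_
    rcases vertex_cases x with ⟨p, rfl⟩ | rfl <;> rcases vertex_cases y with ⟨q, rfl⟩ | rfl
    · -- old edge
      have hpq : G.Adj p q := ext_adj_cst.mp hxy
      rw [deleteEdges, del_cst_edge] at hre
      have hb := (isAcyclic_iff_forall_adj_isBridge.mp hG) hpq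
      rw [isBridge_iff] at hb
      rcases reach_cst_iff.mp hre with hplain | ⟨hd1, hd2, ⟨r1, r2⟩ | ⟨r1, r2⟩⟩
      · exact hb hplain
      · refine hnot ⟨hd1, hd2, ?_⟩
        have r1' := r1.mono sdiff_le
        have r2' := r2.mono sdiff_le
        exact r1'.symm.trans (hpq.reachable.trans r2'.symm)
      · refine hnot ⟨hd1, hd2, ?_⟩
        have r1' := r1.mono sdiff_le
        have r2' := r2.mono sdiff_le
        exact r2'.trans (hpq.symm.reachable.trans r1')
    · -- edge from old vertex to last vertex
      rcases ext_adj_cst_lv.mp hxy with ⟨rfl, hd2⟩ | ⟨rfl, hd1⟩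
      · rw [Sym2.eq_swap (a := cst (av j)) (b := lv j)] at hre
        rw [deleteEdges, del_lv_edge_av] at hre
        rcases reach_lv_iff.mp hre with ⟨hf, _⟩ | ⟨hd1, hrch⟩
        · exact absurd hf (by simp)
        · rcases hrch with hr | ⟨_, hf, _⟩
          · exact hnot ⟨hd1, hd2, hr⟩
          · exact absurd hf (by simp)
      · rw [Sym2.eq_swap (a := cst (bv j)) (b := lv j)] at hre
        rw [deleteEdges, del_lv_edge_bv] at hre
        rcases reach_lv_iff.mp hre with ⟨hd2, hrch⟩ | ⟨hf, _⟩
        · rcases hrch with hr | ⟨hf, _⟩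
          · exact hnot ⟨hd1, hd2, hr.symm⟩
          · exact absurd hf (by simp)
        · exact absurd hf (by simp)
    · -- edge from last vertex to old vertex
      rcases ext_adj_lv.mp hxy with ⟨he, hd2⟩ | ⟨he, hd1⟩
      all_goals obtain rfl := cst_inj he
      · rw [deleteEdges, del_lv_edge_av] at hre
        rcases reach_lv_iff.mp (hre.symm) with ⟨hf, _⟩ | ⟨hd1, hrch⟩
        · exact absurd hf (by simp)
        · rcases hrch with hr | ⟨_, hf, _⟩
          · exact hnot ⟨hd1, hd2, hr⟩
          · exact absurd hf (by simp)
      · rw [deleteEdges, del_lv_edge_bv] at hre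
        rcases reach_lv_iff.mp (hre.symm) with ⟨hd2, hrch⟩ | ⟨hf, _⟩
        · rcases hrch with hr | ⟨hf, _⟩
          · exact hnot ⟨hd1, hd2, hr.symm⟩
          · exact absurd hf (by simp)
        · exact absurd hf (by simp)
    · exact absurd hxy (ext _ _ _).irrefl

/-- the separated-forest state: acyclic, last two vertices not connected,
everything reaches one of them. -/
def Sep (G : SimpleGraph (Fin (j+2))) : Prop :=
  G.IsAcyclic ∧ ¬G.Reachable (av j) (bv j) ∧
    ∀ v, G.Reachable v (av j) ∨ G.Reachable v (bv j)

lemma av_succ : av (j+1) = lv j := rfl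
lemma bv_succ : bv (j+1) = cst (av j) := rfl

lemma conn_iff_av : G.Connected ↔ ∀ u, G.Reachable u (av j) := by
  constructor
  · intro h u; exact h.preconnected u (av j)
  · intro h
    rw [connected_iff]
    exact ⟨fun x y => (h x).trans (h y).symm, ⟨av j⟩⟩

lemma ST_ff : ¬((ext G false false).Connected) := by
  intro h
  rcases ext_connected_iff.mp h (av j) with ⟨hf, _⟩ | ⟨hf, _⟩ <;> simp at hf

lemma rch_plain {u v : Fin (j+2)} (h : Rch G d₁ d₂ u v) (hd : d₁ = false ∨ d₂ = false) :
    G.Reachable u v := by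
  rcases h with h | ⟨h1, h2, _⟩
  · exact h
  · rcases hd with hd | hd <;> (subst hd; simp_all)

lemma ST_ft : ((ext G false true).Connected ∧ (ext G false true).IsAcyclic) ↔
    (G.Connected ∧ G.IsAcyclic) := by
  rw [ext_connected_iff, ext_acyclic_iff, conn_iff_av]
  constructor
  · rintro ⟨hc, ha, _⟩
    refine ⟨fun u => ?_, ha⟩
    rcases hc u with ⟨_, hr⟩ | ⟨hf, _⟩
    · exact rch_plain hr (Or.inl rfl)
    · simp at hf
  · rintro ⟨hc, ha⟩
    exact ⟨fun u => Or.inl ⟨rfl, Or.inl (hc u)⟩, ha, by simp⟩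

lemma conn_iff_bv : G.Connected ↔ ∀ u, G.Reachable u (bv j) := by
  constructor
  · intro h u; exact h.preconnected u (bv j)
  · intro h
    rw [connected_iff]
    exact ⟨fun x y => (h x).trans (h y).symm, ⟨bv j⟩⟩

lemma ST_tf : ((ext G true false).Connected ∧ (ext G true false).IsAcyclic) ↔
    (G.Connected ∧ G.IsAcyclic) := by
  rw [ext_connected_iff, ext_acyclic_iff, conn_iff_bv]
  constructor
  · rintro ⟨hc, ha, _⟩
    refine ⟨fun u => ?_, ha⟩
    rcases hc u with ⟨hf, _⟩ | ⟨_, hr⟩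
    · simp at hf
    · exact rch_plain hr (Or.inr rfl)
  · rintro ⟨hc, ha⟩
    exact ⟨fun u => Or.inr ⟨rfl, Or.inl (hc u)⟩, ha, by simp⟩

lemma ST_tt : ((ext G true true).Connected ∧ (ext G true true).IsAcyclic) ↔ Sep G := by
  rw [ext_connected_iff, ext_acyclic_iff]
  constructor
  · rintro ⟨hc, ha, hnr⟩
    have hnr' : ¬G.Reachable (av j) (bv j) := fun hr => hnr ⟨rfl, rfl, hr⟩
    refine ⟨ha, hnr', fun v => ?_⟩
    rcases hc v with ⟨_, hr⟩ | ⟨_, hr⟩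
    · rcases hr with hr | ⟨_, _, ⟨r1, r2⟩ | ⟨r1, r2⟩⟩
      · exact Or.inl hr
      · exact absurd r2.symm hnr'
      · exact Or.inr r1
    · rcases hr with hr | ⟨_, _, ⟨r1, r2⟩ | ⟨r1, r2⟩⟩
      · exact Or.inr hr
      · exact Or.inl r1
      · exact absurd r2 hnr'
  · rintro ⟨ha, hnr, hall⟩
    refine ⟨fun u => ?_, ha, fun h => hnr h.2.2⟩
    rcases hall u with hr | hr
    · exact Or.inl ⟨rfl, Or.inl hr⟩
    · exact Or.inr ⟨rfl, Or.inl hr⟩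

lemma SP_d2 : ¬ Sep (ext G d₁ true) := by
  rintro ⟨_, hnr, _⟩
  rw [av_succ, bv_succ] at hnr
  exact hnr (ext_adj_lv.mpr (Or.inl ⟨rfl, rfl⟩)).reachable

lemma SP_ff : Sep (ext G false false) ↔ (G.Connected ∧ G.IsAcyclic) := by
  unfold Sep
  rw [av_succ, bv_succ, ext_acyclic_iff, conn_iff_av]
  constructor
  · rintro ⟨⟨ha, _⟩, _, hall⟩
    refine ⟨fun u => ?_, ha⟩
    rcases hall (cst u) with hr | hr
    · rcases reach_lv_iff.mp hr with ⟨hf, _⟩ | ⟨hf, _⟩ <;> simp at hf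
    · exact rch_plain (reach_cst_iff.mp hr) (Or.inl rfl)
  · rintro ⟨hc, ha⟩
    refine ⟨⟨ha, by simp⟩, fun hr => ?_, fun x => ?_⟩
    · rcases reach_lv_iff.mp hr.symm with ⟨hf, _⟩ | ⟨hf, _⟩ <;> simp at hf
    · rcases vertex_cases x with ⟨u, rfl⟩ | rfl
      · exact Or.inr (reach_cst_iff.mpr (Or.inl (hc u)))
      · exact Or.inl (Reachable.refl _)

lemma SP_tf : Sep (ext G true false) ↔ Sep G := by
  unfold Sep
  rw [av_succ, bv_succ, ext_acyclic_iff]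
  constructor
  · rintro ⟨⟨ha, _⟩, hnr, hall⟩
    refine ⟨ha, fun hr => ?_, fun v => ?_⟩
    · exact hnr (reach_lv_iff.mpr (Or.inr ⟨rfl, Or.inl hr⟩)).symm
    · rcases hall (cst v) with hr | hr
      · rcases reach_lv_iff.mp hr with ⟨hf, _⟩ | ⟨_, hrch⟩
        · simp at hf
        · exact Or.inr (rch_plain hrch (Or.inr rfl))
      · exact Or.inl (rch_plain (reach_cst_iff.mp hr) (Or.inr rfl))
  · rintro ⟨ha, hnr, hall⟩
    refine ⟨⟨ha, fun h => by simp at h⟩, fun hr => ?_, fun x => ?_⟩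
    · rcases reach_lv_iff.mp hr.symm with ⟨hf, _⟩ | ⟨_, hrch⟩
      · simp at hf
      · exact hnr (rch_plain hrch (Or.inr rfl))
    · rcases vertex_cases x with ⟨u, rfl⟩ | rfl
      · rcases hall u with hr | hr
        · exact Or.inr (reach_cst_iff.mpr (Or.inl hr))
        · exact Or.inl (reach_lv_iff.mpr (Or.inr ⟨rfl, Or.inl hr⟩))
      · exact Or.inl (Reachable.refl _)

def res (T : SimpleGraph (Fin (j+3))) : SimpleGraph (Fin (j+2)) := T.comap cst

lemma res_adj {T : SimpleGraph (Fin (j+3))} {u v : Fin (j+2)} :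
    (res T).Adj u v ↔ T.Adj (cst u) (cst v) := Iff.rfl

lemma res_le {T : SimpleGraph (Fin (j+3))} (hT : T ≤ linear2Tree (j+3)) :
    res T ≤ linear2Tree (j+2) := by
  intro u v h
  have h2 := hT h
  obtain ⟨hne, hb1, hb2⟩ := h2
  refine ⟨fun he => hne (by rw [he]), hb1, hb2⟩

lemma ext_le (hG : G ≤ linear2Tree (j+2)) : ext G d₁ d₂ ≤ linear2Tree (j+3) := by
  intro x y h
  rcases h with ⟨hx, hy, hadj⟩ | h | h | h | h
  · obtain ⟨hne, hb1, hb2⟩ := hG hadj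
    refine ⟨fun he => hne (Fin.ext (show x.val = y.val from by rw [he])), hb1, hb2⟩
  all_goals exact ⟨fun he => by rw [he] at h; omega, by omega, by omega⟩

lemma res_ext : res (ext G d₁ d₂) = G := by
  ext u v
  exact ext_adj_cst

lemma ext_adj_flag1 : (ext G d₁ d₂).Adj (lv j) (cst (bv j)) ↔ d₁ = true := by
  rw [ext_adj_lv]
  constructor
  · rintro (⟨he, hd⟩ | ⟨_, hd⟩)
    · exact absurd (cst_inj he).symm av_ne_bv
    · exact hd
  · intro hd; exact Or.inr ⟨rfl, hd⟩

lemma ext_adj_flag2 : (ext G d₁ d₂).Adj (lv j) (cst (av j)) ↔ d₂ = true := by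
  rw [ext_adj_lv]
  constructor
  · rintro (⟨_, hd⟩ | ⟨he, hd⟩)
    · exact hd
    · exact absurd (cst_inj he) av_ne_bv
  · intro hd; exact Or.inl ⟨rfl, hd⟩

lemma ext_res {T : SimpleGraph (Fin (j+3))} (hT : T ≤ linear2Tree (j+3))
    (h1 : d₁ = true ↔ T.Adj (lv j) (cst (bv j)))
    (h2 : d₂ = true ↔ T.Adj (lv j) (cst (av j))) :
    ext (res T) d₁ d₂ = T := by
  have key : ∀ p : Fin (j+2), ((ext (res T) d₁ d₂).Adj (cst p) (lv j) ↔ T.Adj (cst p) (lv j)) := by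
    intro p
    rw [ext_adj_cst_lv]
    constructor
    · rintro (⟨rfl, hd⟩ | ⟨rfl, hd⟩)
      · exact (h2.mp hd).symm
      · exact (h1.mp hd).symm
    · intro h
      obtain ⟨hne, hb1, hb2⟩ := hT h
      have hlv : (lv j).val = j + 2 := rfl
      have hcp : (cst p).val = p.val := rfl
      have hp2 : p.val < j + 2 := p.isLt
      have : p.val = j + 1 ∨ p.val = j := by omega
      rcases this with hp | hp
      · have hpav : p = av j := Fin.ext hp
        exact Or.inl ⟨hpav, h2.mpr (hpav ▸ h.symm)⟩
      · have hpbv : p = bv j := Fin.ext hp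
        exact Or.inr ⟨hpbv, h1.mpr (hpbv ▸ h.symm)⟩
  ext x y
  rcases vertex_cases x with ⟨p, rfl⟩ | rfl <;> rcases vertex_cases y with ⟨q, rfl⟩ | rfl
  · rw [ext_adj_cst, res_adj]
  · exact key p
  · rw [adj_comm, adj_comm T]
    exact key q
  · constructor
    · intro h; exact absurd h (ext _ _ _).irrefl
    · intro h; exact absurd h T.irrefl

lemma ext_inj {G G' : SimpleGraph (Fin (j+2))} {d₁ d₂ e₁ e₂ : Bool}
    (h : ext G d₁ d₂ = ext G' e₁ e₂) : G = G' ∧ d₁ = e₁ ∧ d₂ = e₂ := by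
  refine ⟨?_, ?_, ?_⟩
  · rw [← res_ext (G := G) (d₁ := d₁) (d₂ := d₂), h, res_ext]
  · have t1 := ext_adj_flag1 (G := G) (d₁ := d₁) (d₂ := d₂)
    rw [h, ext_adj_flag1] at t1
    cases d₁ <;> cases e₁ <;> simp_all
  · have t2 := ext_adj_flag2 (G := G) (d₁ := d₁) (d₂ := d₂)
    rw [h, ext_adj_flag2] at t2
    cases d₂ <;> cases e₂ <;> simp_all

open scoped Classical

noncomputable def Afun (j : ℕ) : ℕ :=
  Nat.card {T : SimpleGraph (Fin (j+2)) //
    T ≤ linear2Tree (j+2) ∧ T.Connected ∧ T.IsAcyclic}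

noncomputable def Bfun (j : ℕ) : ℕ :=
  Nat.card {T : SimpleGraph (Fin (j+2)) // T ≤ linear2Tree (j+2) ∧ Sep T}

abbrev STs (j : ℕ) := {T : SimpleGraph (Fin (j+2)) //
    T ≤ linear2Tree (j+2) ∧ T.Connected ∧ T.IsAcyclic}
abbrev SPs (j : ℕ) := {T : SimpleGraph (Fin (j+2)) // T ≤ linear2Tree (j+2) ∧ Sep T}

noncomputable def FA (j : ℕ) : (STs j ⊕ STs j) ⊕ SPs j → STs (j+1) :=
  fun x => match x with
  | .inl (.inl ⟨G, hle, hst⟩) => ⟨ext G false true, ext_le hle, ST_ft.mpr hst⟩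
  | .inl (.inr ⟨G, hle, hst⟩) => ⟨ext G true false, ext_le hle, ST_tf.mpr hst⟩
  | .inr ⟨G, hle, hsp⟩ => ⟨ext G true true, ext_le hle, ST_tt.mpr hsp⟩

lemma FA_bijective (j : ℕ) : Function.Bijective (FA j) := by
  constructor
  · rintro ((⟨G, hle, hst⟩ | ⟨G, hle, hst⟩) | ⟨G, hle, hst⟩)
      ((⟨G', hle', hst'⟩ | ⟨G', hle', hst'⟩) | ⟨G', hle', hst'⟩) h <;>
      simp only [FA] at h <;>
      obtain ⟨hG, hf1, hf2⟩ := ext_inj (congrArg Subtype.val h) <;>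
      first
        | (subst hG; rfl)
        | simp at hf1 hf2
  · rintro ⟨T, hle, hconn, hacyc⟩
    by_cases h2 : T.Adj (lv j) (cst (av j)) <;> by_cases h1 : T.Adj (lv j) (cst (bv j))
    · have heq : ext (res T) true true = T :=
        ext_res hle (by simp [h1]) (by simp [h2])
      have hsp : Sep (res T) := ST_tt.mp (by rw [heq]; exact ⟨hconn, hacyc⟩)
      exact ⟨.inr ⟨res T, res_le hle, hsp⟩, Subtype.ext heq⟩
    · have heq : ext (res T) false true = T :=
        ext_res hle (by simp [h1]) (by simp [h2])
      have hst : (res T).Connected ∧ (res T).IsAcyclic :=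
        ST_ft.mp (by rw [heq]; exact ⟨hconn, hacyc⟩)
      exact ⟨.inl (.inl ⟨res T, res_le hle, hst⟩), Subtype.ext heq⟩
    · have heq : ext (res T) true false = T :=
        ext_res hle (by simp [h1]) (by simp [h2])
      have hst : (res T).Connected ∧ (res T).IsAcyclic :=
        ST_tf.mp (by rw [heq]; exact ⟨hconn, hacyc⟩)
      exact ⟨.inl (.inr ⟨res T, res_le hle, hst⟩), Subtype.ext heq⟩
    · exfalso
      have heq : ext (res T) false false = T :=
        ext_res hle (by simp [h1]) (by simp [h2])
      exact ST_ff (by rw [heq]; exact hconn)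

noncomputable def FB (j : ℕ) : STs j ⊕ SPs j → SPs (j+1) :=
  fun x => match x with
  | .inl ⟨G, hle, hst⟩ => ⟨ext G false false, ext_le hle, SP_ff.mpr hst⟩
  | .inr ⟨G, hle, hsp⟩ => ⟨ext G true false, ext_le hle, SP_tf.mpr hsp⟩

lemma FB_bijective (j : ℕ) : Function.Bijective (FB j) := by
  constructor
  · rintro (⟨G, hle, hst⟩ | ⟨G, hle, hst⟩) (⟨G', hle', hst'⟩ | ⟨G', hle', hst'⟩) h <;>
      simp only [FB] at h <;>
      obtain ⟨hG, hf1, hf2⟩ := ext_inj (congrArg Subtype.val h) <;>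
      first
        | (subst hG; rfl)
        | simp at hf1 hf2
  · rintro ⟨T, hle, hsep⟩
    by_cases h2 : T.Adj (lv j) (cst (av j))
    · exfalso
      by_cases h1 : T.Adj (lv j) (cst (bv j))
      · have heq : ext (res T) true true = T :=
          ext_res hle (by simp [h1]) (by simp [h2])
        exact SP_d2 (by rw [heq]; exact hsep)
      · have heq : ext (res T) false true = T :=
          ext_res hle (by simp [h1]) (by simp [h2])
        exact SP_d2 (by rw [heq]; exact hsep)
    · by_cases h1 : T.Adj (lv j) (cst (bv j))
      · have heq : ext (res T) true false = T :=
          ext_res hle (by simp [h1]) (by simp [h2])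
        have hsp : Sep (res T) := SP_tf.mp (by rw [heq]; exact hsep)
        exact ⟨.inr ⟨res T, res_le hle, hsp⟩, Subtype.ext heq⟩
      · have heq : ext (res T) false false = T :=
          ext_res hle (by simp [h1]) (by simp [h2])
        have hst : (res T).Connected ∧ (res T).IsAcyclic :=
          SP_ff.mp (by rw [heq]; exact hsep)
        exact ⟨.inl ⟨res T, res_le hle, hst⟩, Subtype.ext heq⟩

lemma recA (j : ℕ) : Afun (j+1) = 2 * Afun j + Bfun j := by
  have h := Nat.card_eq_of_bijective (FA j) (FA_bijective j)
  rw [Nat.card_sum, Nat.card_sum] at h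
  unfold Afun Bfun
  rw [← h]
  ring

lemma recB (j : ℕ) : Bfun (j+1) = Afun j + Bfun j := by
  have h := Nat.card_eq_of_bijective (FB j) (FB_bijective j)
  rw [Nat.card_sum] at h
  unfold Afun Bfun
  rw [← h]

lemma l2top : linear2Tree 2 = ⊤ := by
  ext a b
  simp only [linear2Tree, top_adj]
  constructor
  · rintro ⟨h, _, _⟩; exact h
  · intro h
    exact ⟨h, by omega, by omega⟩

lemma sym2_fin2 (a b v w : Fin 2) (hab : a ≠ b) (hvw : v ≠ w) : s(a, b) = s(v, w) := by
  revert hab hvw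
  revert a b v w
  decide

lemma acyc2 (T : SimpleGraph (Fin 2)) : T.IsAcyclic := by
  rw [isAcyclic_iff_forall_adj_isBridge]
  intro v w hvw
  rw [isBridge_iff]
  refine fun hre => ?_
  have hbot : T \ fromEdgeSet {s(v, w)} = ⊥ := by
    ext a b
    simp only [sdiff_adj, fromEdgeSet_adj, Set.mem_singleton_iff, bot_adj]
    constructor
    · rintro ⟨ha, hb⟩
      exact absurd ⟨sym2_fin2 a b v w ha.ne hvw.ne, ha.ne⟩ hb
    · intro h; exact h.elim
  rw [deleteEdges, hbot, reachable_bot] at hre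
  exact hvw.ne hre

lemma conn2 (T : SimpleGraph (Fin 2)) (h : T.Connected) : T = ⊤ := by
  ext a b
  rw [top_adj]
  constructor
  · exact fun hadj => hadj.ne
  · intro hab
    obtain ⟨w⟩ := h.preconnected a b
    cases w with
    | nil => exact absurd rfl hab
    | cons hadj p =>
      rename_i c
      have hcb : c = b := by
        have h1 : a.val ≠ c.val := fun hh => hadj.ne (Fin.ext hh)
        have h2 : a.val ≠ b.val := fun hh => hab (Fin.ext hh)
        have := a.isLt; have := b.isLt; have := c.isLt
        exact Fin.ext (by omega)
      rwa [hcb] at hadj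

lemma Afun_zero : Afun 0 = 1 := by
  rw [Afun, Nat.card_eq_one_iff_unique]
  constructor
  · constructor
    rintro ⟨T, _, hc, _⟩ ⟨T', _, hc', _⟩
    exact Subtype.ext ((conn2 T hc).trans (conn2 T' hc').symm)
  · refine ⟨⟨⊤, le_of_eq l2top.symm, ?_, acyc2 ⊤⟩⟩
    exact connected_top

lemma Bfun_zero : Bfun 0 = 1 := by
  rw [Bfun, Nat.card_eq_one_iff_unique]
  have havbv : av 0 ≠ bv 0 := av_ne_bv
  constructor
  · constructor
    rintro ⟨T, _, _, hnr, _⟩ ⟨T', _, _, hnr', _⟩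
    have hb : ∀ (S : SimpleGraph (Fin 2)), ¬S.Reachable (av 0) (bv 0) → S = ⊥ := by
      intro S hnrS
      ext a b
      rw [bot_adj, iff_false]
      intro hadj
      have hor : (a = av 0 ∧ b = bv 0) ∨ (a = bv 0 ∧ b = av 0) := by
        have h1 : a.val ≠ b.val := fun hh => hadj.ne (Fin.ext hh)
        have ha2 := a.isLt
        have hb2 := b.isLt
        simp only [Fin.ext_iff, av, bv]
        omega
      rcases hor with ⟨rfl, rfl⟩ | ⟨rfl, rfl⟩
      · exact hnrS hadj.reachable
      · exact hnrS hadj.symm.reachable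
    exact Subtype.ext ((hb T hnr).trans (hb T' hnr').symm)
  · refine ⟨⟨⊥, bot_le, isAcyclic_bot, ?_, ?_⟩⟩
    · rw [reachable_bot]; exact havbv
    · intro v
      rw [reachable_bot, reachable_bot]
      have := v.isLt
      rw [Fin.ext_iff, Fin.ext_iff]
      show v.val = 1 ∨ v.val = 0
      omega

lemma AB (j : ℕ) : Afun j = Nat.fib (2*j+2) ∧ Bfun j = Nat.fib (2*j+1) := by
  induction j with
  | zero =>
    constructor
    · rw [Afun_zero]; decide
    · rw [Bfun_zero]; decide
  | succ j ih =>
    obtain ⟨hA, hB⟩ := ih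
    constructor
    · rw [recA, hA, hB]
      have e1 := Nat.fib_add_two (n := 2*j+2)
      have e2 := Nat.fib_add_two (n := 2*j+1)
      ring_nf at e1 e2 ⊢
      omega
    · rw [recB, hA, hB]
      have e2 := Nat.fib_add_two (n := 2*j+1)
      ring_nf at e2 ⊢
      omega

end St11

/-- The number of spanning trees (spanning subgraphs that are connected and
acyclic) of the straight linear 2-tree on `n ≥ 3` vertices, with `m = n - 2` triangles, is
`F_{2m+2}`. -/
theorem stmt11 (n : ℕ) (hn : 3 ≤ n) (m : ℕ) (hm : m = n - 2) :
    Nat.card {T : SimpleGraph (Fin n) //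
      T ≤ linear2Tree n ∧ T.Connected ∧ T.IsAcyclic} = Nat.fib (2 * m + 2) := by
  have hnm : n = m + 2 := by omega
  subst hnm
  have h := (St11.AB m).1
  rw [St11.Afun] at h
  exact h
end

section
/- Let n ≥ 3 and let G_n be the straight linear 2-tree on n vertices. Suppose 1 ≤ j′ ≤ j < j + k ≤ j′ + k′ ≤ n. Then r_{G_n}(j′, j′+k′) − r_{G_n}(j, j+k) ≥ 0, with equality if and only if one of the following holds: (1) j′ = j and k′ = k; (2) j′ = j = 1, k = 1, and k′ = 2; (3) j′ = n − 2, j = n − 1, k = 1, and k′ = 2. -/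
namespace S13
open scoped Classical
def fz (m : ℕ) : ℤ := Nat.fib m

lemma fz_add_two (m : ℕ) : fz (m+2) = fz (m+1) + fz m := by
  unfold fz; rw [Nat.fib_add_two]; push_cast; ring

lemma fz_nonneg (m : ℕ) : 0 ≤ fz m := Int.ofNat_nonneg _
lemma fz_pos (m : ℕ) : 0 < fz (m+1) := by
  unfold fz; exact_mod_cast Nat.fib_pos.mpr (Nat.succ_pos m)
lemma fz_mono (m : ℕ) : fz m ≤ fz (m+1) := by
  unfold fz; exact_mod_cast Nat.fib_le_fib_succ
lemma fz_strict (m : ℕ) (h : 2 ≤ m) : fz m < fz (m+1) := by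
  unfold fz; exact_mod_cast Nat.fib_lt_fib_succ h

lemma fz_two_mul (m : ℕ) : fz (2*m) = fz m * (2 * fz (m+1) - fz m) := by
  unfold fz; rw [Nat.fib_two_mul]
  have h : Nat.fib m ≤ 2 * Nat.fib (m+1) :=
    le_trans Nat.fib_le_fib_succ (by omega)
  push_cast [Nat.cast_sub h]; ring

lemma fz_two_mul_add_one (m : ℕ) : fz (2*m+1) = fz (m+1)^2 + fz m^2 := by
  unfold fz; rw [Nat.fib_two_mul_add_one]; push_cast; ring

lemma fz_add (m t : ℕ) : fz (m+t+1) = fz m * fz t + fz (m+1) * fz (t+1) := by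
  unfold fz; rw [Nat.fib_add]; push_cast; ring

lemma fz3 (x : ℕ) : fz (x+3) = 2*fz (x+1) + fz x := by
  rw [show x+3 = (x+1)+2 by ring, fz_add_two, fz_add_two]; ring
lemma fz4 (x : ℕ) : fz (x+4) = 3*fz (x+1) + 2*fz x := by
  rw [show x+4 = (x+2)+2 by ring, fz_add_two, fz3, fz_add_two]; ring
lemma fz5 (x : ℕ) : fz (x+5) = 5*fz (x+1) + 3*fz x := by
  rw [show x+5 = (x+3)+2 by ring, fz_add_two, fz4, fz3]; ring
lemma fz6 (x : ℕ) : fz (x+6) = 8*fz (x+1) + 5*fz x := by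
  rw [show x+6 = (x+4)+2 by ring, fz_add_two, fz5, fz4]; ring
lemma fz7 (x : ℕ) : fz (x+7) = 13*fz (x+1) + 8*fz x := by
  rw [show x+7 = (x+5)+2 by ring, fz_add_two, fz6, fz5]; ring
lemma fz8 (x : ℕ) : fz (x+8) = 21*fz (x+1) + 13*fz x := by
  rw [show x+8 = (x+6)+2 by ring, fz_add_two, fz7, fz6]; ring
lemma fz9 (x : ℕ) : fz (x+9) = 34*fz (x+1) + 21*fz x := by
  rw [show x+9 = (x+7)+2 by ring, fz_add_two, fz8, fz7]; ring

lemma fzv0 : fz 0 = 0 := rfl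
lemma fzv1 : fz 1 = 1 := rfl
lemma fzv2 : fz 2 = 1 := by unfold fz; norm_num
lemma fzv3 : fz 3 = 2 := by unfold fz; norm_num [Nat.fib_add_two]
lemma fzv4 : fz 4 = 3 := by unfold fz; norm_num [Nat.fib_add_two]
lemma fzv5 : fz 5 = 5 := by unfold fz; norm_num [Nat.fib_add_two]
lemma fzv6 : fz 6 = 8 := by unfold fz; norm_num [Nat.fib_add_two]
lemma fzv7 : fz 7 = 13 := by unfold fz; norm_num [Nat.fib_add_two]

def Ak (k : ℕ) : ℤ := k * fz (2*k) + 4 * fz k ^ 2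
def Bk (k : ℕ) : ℤ := fz (2*k) + k * (fz (2*k+1) - fz (2*k)) - 2 * fz k ^ 2
def Ck (k : ℕ) : ℤ := k * (2 * fz (2*k) - fz (2*k+1)) - fz (2*k) + fz k ^ 2

def T (p q k : ℕ) : ℤ :=
  Ak k * fz (2*p+1) * fz (2*q+1) + Bk k * (fz (2*p+1) * fz (2*q) + fz (2*p) * fz (2*q+1))
    + Ck k * fz (2*p) * fz (2*q)

lemma T_symm (p q k : ℕ) : T p q k = T q p k := by unfold T; ring

lemma T_zero (p q : ℕ) : T p q 0 = 0 := by
  unfold T Ak Bk Ck; norm_num [fzv0]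

lemma step_q (p q k : ℕ) :
    T p q (k+1) - T p (q+1) k
      = 5 * fz (2*q+1) * ((fz (k+1)^2 - fz k^2) * fz (2*p+1) + fz k^2 * fz (2*p)) := by
  unfold T Ak Bk Ck
  rw [show 2*(k+1)+1 = (2*k+1)+2 by ring, fz_add_two,
      show 2*(k+1) = (2*k)+2 by ring, fz_add_two,
      show 2*(q+1)+1 = (2*q+1)+2 by ring, fz_add_two,
      show 2*(q+1) = (2*q)+2 by ring, fz_add_two,
      fz_two_mul, fz_two_mul_add_one]
  push_cast
  ring

lemma step_p (p q k : ℕ) :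
    T p q (k+1) - T (p+1) q k
      = 5 * fz (2*p+1) * ((fz (k+1)^2 - fz k^2) * fz (2*q+1) + fz k^2 * fz (2*q)) := by
  rw [T_symm p q (k+1), T_symm (p+1) q k]; exact step_q q p k


-- difference of one q-step, with equality characterization
lemma step_q_nonneg (p q k : ℕ) (hk : 1 ≤ k) :
    T p (q+1) k ≤ T p q (k+1) ∧ (T p q (k+1) = T p (q+1) k ↔ (k = 1 ∧ p = 0)) := by
  have h := step_q p q k
  have hfk : 0 < fz k := by
    obtain ⟨k', rfl⟩ : ∃ k', k = k'+1 := ⟨k-1, by omega⟩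
    exact fz_pos k'
  have hmono : fz k ≤ fz (k+1) := fz_mono k
  have hq : 0 < fz (2*q+1) := by
    rw [show 2*q+1 = (2*q)+1 by ring]; exact fz_pos _
  have hp1 : 0 < fz (2*p+1) := by
    rw [show 2*p+1 = (2*p)+1 by ring]; exact fz_pos _
  have hp0 : 0 ≤ fz (2*p) := fz_nonneg _
  have hsq : (0:ℤ) ≤ fz (k+1)^2 - fz k^2 := by nlinarith
  have t1 : (0:ℤ) ≤ (fz (k+1)^2 - fz k^2) * fz (2*p+1) := mul_nonneg hsq hp1.le
  have t2 : (0:ℤ) ≤ fz k^2 * fz (2*p) := mul_nonneg (sq_nonneg _) hp0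
  have t3 : (0:ℤ) ≤ 5 * fz (2*q+1) * ((fz (k+1)^2 - fz k^2) * fz (2*p+1) + fz k^2 * fz (2*p)) := by
    have : (0:ℤ) ≤ 5 * fz (2*q+1) := by linarith
    exact mul_nonneg this (by linarith)
  constructor
  · linarith
  · constructor
    · intro he
      rw [he] at h
      simp only [sub_self] at h
      have h5 : (fz (k+1)^2 - fz k^2) * fz (2*p+1) + fz k^2 * fz (2*p) = 0 := by nlinarith
      have h6 : (fz (k+1)^2 - fz k^2) * fz (2*p+1) = 0 ∧ fz k^2 * fz (2*p) = 0 := by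
        constructor <;> nlinarith
      have hk1 : k = 1 := by
        by_contra hne
        have : 2 ≤ k := by omega
        have := fz_strict k this
        have : 0 < (fz (k+1)^2 - fz k^2) * fz (2*p+1) := by nlinarith
        omega
      have hp : p = 0 := by
        by_contra hne
        obtain ⟨p', rfl⟩ : ∃ p', p = p'+1 := ⟨p-1, by omega⟩
        have : 0 < fz (2*(p'+1)) := by
          rw [show 2*(p'+1) = (2*p'+1)+1 by ring]; exact fz_pos _
        have : 0 < fz k^2 * fz (2*(p'+1)) := by positivity
        have := h6.2
        omega
      exact ⟨hk1, hp⟩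
    · rintro ⟨rfl, rfl⟩
      have e : T 0 q (1+1) - T 0 (q+1) 1 = 0 := by
        rw [h, show (1+1:ℕ) = 2 from rfl, fzv2, fzv1, show (2*0:ℕ) = 0 from rfl, fzv0]; ring
      omega

lemma step_p_nonneg (p q k : ℕ) (hk : 1 ≤ k) :
    T (p+1) q k ≤ T p q (k+1) ∧ (T p q (k+1) = T (p+1) q k ↔ (k = 1 ∧ q = 0)) := by
  rw [T_symm p q (k+1), T_symm (p+1) q k]
  exact step_q_nonneg q p k hk

-- chain of d q-steps
lemma chain_q (p q : ℕ) : ∀ (d k : ℕ), 1 ≤ k →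
    T p (q+d) k ≤ T p q (k+d) ∧
      (T p q (k+d) = T p (q+d) k ↔ (d = 0 ∨ (d = 1 ∧ k = 1 ∧ p = 0))) := by
  intro d
  induction d with
  | zero => intro k hk; simp
  | succ d ih =>
    intro k hk
    have h1 := step_q_nonneg p (q+d) k hk
    have h2 := ih (k+1) (by omega)
    have e1 : q+(d+1) = (q+d)+1 := by ring
    have e2 : k+(d+1) = (k+1)+d := by ring
    rw [e1, e2]
    constructor
    · exact le_trans h1.1 h2.1
    · constructor
      · intro he
        have hle1 := h1.1
        have hle2 := h2.1
        have ha : T p q ((k+1)+d) = T p (q+d) (k+1) := by omega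
        have hb : T p (q+d) (k+1) = T p ((q+d)+1) k := by omega
        have hc := (h2.2).mp ha
        have hd := (h1.2).mp hb
        rcases hc with h | h
        · subst h; omega
        · omega
      · rintro (h | h)
        · omega
        · obtain ⟨hd1, hk1, hp0⟩ := h
          have : d = 0 := by omega
          subst this; subst hk1; subst hp0
          have := (h1.2).mpr ⟨rfl, rfl⟩
          simpa using this

lemma chain_p (p q : ℕ) : ∀ (d k : ℕ), 1 ≤ k →
    T (p+d) q k ≤ T p q (k+d) ∧
      (T p q (k+d) = T (p+d) q k ↔ (d = 0 ∨ (d = 1 ∧ k = 1 ∧ q = 0))) := by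
  intro d k hk
  have := chain_q q p d k hk
  rw [T_symm q p, T_symm q (p+d)] at this
  exact this

/-- Main monotonicity with equality characterization, in (p,q,k)-coordinates. -/
lemma T_mono (p q p' q' k : ℕ) (hp : p' ≤ p) (hq : q' ≤ q) (hk : 1 ≤ k) :
    T p q k ≤ T p' q' (k + (p-p') + (q-q')) ∧
      (T p' q' (k + (p-p') + (q-q')) = T p q k ↔
        ((p' = p ∧ q' = q) ∨ (p = 0 ∧ p' = 0 ∧ k = 1 ∧ q' + 1 = q) ∨
         (q = 0 ∧ q' = 0 ∧ k = 1 ∧ p' + 1 = p))) := by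
  obtain ⟨dp, rfl⟩ : ∃ dp, p = p' + dp := ⟨p - p', by omega⟩
  obtain ⟨dq, rfl⟩ : ∃ dq, q = q' + dq := ⟨q - q', by omega⟩
  have e1 : p' + dp - p' = dp := by omega
  have e2 : q' + dq - q' = dq := by omega
  rw [e1, e2]
  have hA := chain_p p' (q'+dq) dp k hk
  have hB := chain_q p' q' dq (k+dp) (by omega)
  constructor
  · calc T (p'+dp) (q'+dq) k ≤ T p' (q'+dq) (k+dp) := hA.1
      _ ≤ T p' q' ((k+dp)+dq) := hB.1
      _ = T p' q' (k+dp+dq) := by ring_nf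
  constructor
  · intro he
    have hle1 := hA.1
    have hle2 := hB.1
    have ha : T p' q' ((k+dp)+dq) = T p' (q'+dq) (k+dp) := by
      have : T p' q' (k+dp+dq) = T p' q' ((k+dp)+dq) := by ring_nf
      omega
    have hb : T p' (q'+dq) (k+dp) = T (p'+dp) (q'+dq) k := by
      have : T p' q' (k+dp+dq) = T p' q' ((k+dp)+dq) := by ring_nf
      omega
    have hc := (hB.2).mp ha
    have hd := (hA.2).mp hb
    rcases hc with h | h <;> rcases hd with h' | h' <;> omega
  · rintro (⟨h1, h2⟩ | ⟨h1, h2, h3, h4⟩ | ⟨h1, h2, h3, h4⟩)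
    · have : dp = 0 := by omega
      subst this
      have : dq = 0 := by omega
      subst this
      simp
    · -- p = p' = 0, k = 1, dq = 1, dp = 0
      have hdp : dp = 0 := by omega
      subst hdp
      have hdq : dq = 1 := by omega
      subst hdq; subst h3
      have h2' : p' = 0 := by omega
      subst h2'
      have := (hB.2).mpr (Or.inr ⟨rfl, by omega, rfl⟩)
      have h0 := (hA.2).mpr (Or.inl rfl)
      have : T 0 q' ((1+0)+1) = T 0 (q'+1) (1+0) := by
        have := (hB.2).mpr (Or.inr ⟨rfl, by omega, rfl⟩)
        omega
      omega
    · -- q = q' = 0, dq = 0, k = 1, dp = 1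
      have hdq : dq = 0 := by omega
      subst hdq
      have hdp : dp = 1 := by omega
      subst hdp; subst h3; subst h2
      have := (hA.2).mpr (Or.inr ⟨rfl, rfl, rfl⟩)
      have h0 := (hB.2).mpr (Or.inl rfl)
      omega

-- fragment to append into namespace S13 (before end): omega defs and harmonic lemma
def wf (a m b : ℕ) : ℤ :=
  fz (2*a+1) * ((fz (m+1)^2 - fz m^2) * fz (2*b+1) + fz m^2 * fz (2*b))

def w (n c t : ℕ) : ℤ :=
  if t ≤ c then wf (n-c-1) (c-t) (t-1) else - wf (c-1) (t-c-1) (n-t)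

lemma w_eql (n c t a m b : ℕ) (h : t ≤ c) (ha : n-c-1 = a) (hm : c-t = m) (hb : t-1 = b) :
    w n c t = wf a m b := by
  unfold w; rw [if_pos h, ha, hm, hb]

lemma w_eqr (n c t a m b : ℕ) (h : ¬ (t ≤ c)) (ha : c-1 = a) (hm : t-c-1 = m) (hb : n-t = b) :
    w n c t = - wf a m b := by
  unfold w; rw [if_neg h, ha, hm, hb]

lemma w_harm_le (n c s : ℕ) (hn : 3 ≤ n) (hc1 : 1 ≤ c) (hc2 : c+1 ≤ n) (hs1 : 1 ≤ s)
    (hsc : s ≤ c) :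
    (if 3 ≤ s then w n c s - w n c (s-2) else 0) +
    (if 2 ≤ s then w n c s - w n c (s-1) else 0) +
    (if s+1 ≤ n then w n c s - w n c (s+1) else 0) +
    (if s+2 ≤ n then w n c s - w n c (s+2) else 0)
      = if s = c then 2 * fz (2*n-2) else 0 := by
  rcases Nat.lt_or_ge (s+1) c with hA | hBC
  · -- s + 2 ≤ c : far zone
    obtain ⟨m, hm⟩ : ∃ m, c = s+2+m := ⟨c-s-2, by omega⟩
    obtain ⟨Q, hQ⟩ : ∃ Q, n = c+1+Q := ⟨n-c-1, by omega⟩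
    rcases Nat.lt_or_ge s 3 with hs3 | hs3
    · rcases Nat.lt_or_ge s 2 with hs2 | hs2
      · -- s = 1
        rw [w_eql n c s Q (m+2) 0 (by omega) (by omega) (by omega) (by omega),
            w_eql n c (s+1) Q (m+1) 1 (by omega) (by omega) (by omega) (by omega),
            w_eql n c (s+2) Q m 2 (by omega) (by omega) (by omega) (by omega)]
        split_ifs <;> try (exfalso; omega)
        unfold wf
        simp only [show m+2+1 = m+3 by omega, show m+1+1 = m+2 by omega,
          show 2*0+1 = 1 by omega, show 2*0 = 0 by omega,
          show 2*1+1 = 3 by omega, show 2*1 = 2 by omega,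
          show 2*2+1 = 5 by omega, show 2*2 = 4 by omega,
          fz3, fz4, fz5, fz_add_two, fzv0, fzv1, fzv2]
        ring
      · -- s = 2
        rw [w_eql n c (s-1) Q (m+3) 0 (by omega) (by omega) (by omega) (by omega),
            w_eql n c s Q (m+2) 1 (by omega) (by omega) (by omega) (by omega),
            w_eql n c (s+1) Q (m+1) 2 (by omega) (by omega) (by omega) (by omega),
            w_eql n c (s+2) Q m 3 (by omega) (by omega) (by omega) (by omega)]
        split_ifs <;> try (exfalso; omega)
        unfold wf
        simp only [show m+3+1 = m+4 by omega, show m+2+1 = m+3 by omega,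
          show m+1+1 = m+2 by omega,
          show 2*0+1 = 1 by omega, show 2*0 = 0 by omega,
          show 2*1+1 = 3 by omega, show 2*1 = 2 by omega,
          show 2*2+1 = 5 by omega, show 2*2 = 4 by omega,
          show 2*3+1 = 7 by omega, show 2*3 = 6 by omega,
          fz3, fz4, fz5, fz6, fz7, fz_add_two, fzv0, fzv1, fzv2]
        ring
    · -- s ≥ 3
      obtain ⟨x, hx⟩ : ∃ x, s = x+3 := ⟨s-3, by omega⟩
      rw [w_eql n c (s-2) Q (m+4) x (by omega) (by omega) (by omega) (by omega),
          w_eql n c (s-1) Q (m+3) (x+1) (by omega) (by omega) (by omega) (by omega),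
          w_eql n c s Q (m+2) (x+2) (by omega) (by omega) (by omega) (by omega),
          w_eql n c (s+1) Q (m+1) (x+3) (by omega) (by omega) (by omega) (by omega),
          w_eql n c (s+2) Q m (x+4) (by omega) (by omega) (by omega) (by omega)]
      split_ifs <;> try (exfalso; omega)
      unfold wf
      simp only [show m+4+1 = m+5 by omega, show m+3+1 = m+4 by omega,
        show m+2+1 = m+3 by omega, show m+1+1 = m+2 by omega,
        show 2*(x+1)+1 = 2*x+3 by omega, show 2*(x+1) = 2*x+2 by omega,
        show 2*(x+2)+1 = 2*x+5 by omega, show 2*(x+2) = 2*x+4 by omega,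
        show 2*(x+3)+1 = 2*x+7 by omega, show 2*(x+3) = 2*x+6 by omega,
        show 2*(x+4)+1 = 2*x+9 by omega, show 2*(x+4) = 2*x+8 by omega,
        fz3, fz4, fz5, fz6, fz7, fz8, fz9, fz_add_two]
      ring
  · rcases Nat.lt_or_ge s c with hB | hC
    · -- s = c - 1
      have hsc1 : s + 1 = c := by omega
      obtain ⟨Q, hQ⟩ : ∃ Q, n = c+1+Q := ⟨n-c-1, by omega⟩
      rcases Nat.lt_or_ge s 3 with hs3 | hs3
      · rcases Nat.lt_or_ge s 2 with hs2 | hs2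
        · -- s = 1, c = 2
          rw [w_eql n c s Q 1 0 (by omega) (by omega) (by omega) (by omega),
              w_eql n c (s+1) Q 0 1 (by omega) (by omega) (by omega) (by omega),
              w_eqr n c (s+2) 1 0 Q (by omega) (by omega) (by omega) (by omega)]
          split_ifs <;> try (exfalso; omega)
          unfold wf
          simp only [show 2*0+1 = 1 by omega, show 2*0 = 0 by omega,
            show 2*1+1 = 3 by omega, show 2*1 = 2 by omega,
            show 1+1 = 2 by omega, show 0+1 = 1 by omega,
            fz3, fz_add_two, fzv0, fzv1, fzv2, fzv3]
          ring
        · -- s = 2, c = 3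
          rw [w_eql n c (s-1) Q 2 0 (by omega) (by omega) (by omega) (by omega),
              w_eql n c s Q 1 1 (by omega) (by omega) (by omega) (by omega),
              w_eql n c (s+1) Q 0 2 (by omega) (by omega) (by omega) (by omega),
              w_eqr n c (s+2) 2 0 Q (by omega) (by omega) (by omega) (by omega)]
          split_ifs <;> try (exfalso; omega)
          unfold wf
          simp only [show 2*0+1 = 1 by omega, show 2*0 = 0 by omega,
            show 2*1+1 = 3 by omega, show 2*1 = 2 by omega,
            show 2*2+1 = 5 by omega, show 2*2 = 4 by omega,
            show 2+1 = 3 by omega, show 1+1 = 2 by omega, show 0+1 = 1 by omega,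
            fz3, fz4, fz5, fz_add_two, fzv0, fzv1, fzv2, fzv3, fzv4, fzv5]
          ring
      · -- s ≥ 3, c ≥ 4
        obtain ⟨y, hy⟩ : ∃ y, c = y+4 := ⟨c-4, by omega⟩
        rw [w_eql n c (s-2) Q 3 y (by omega) (by omega) (by omega) (by omega),
            w_eql n c (s-1) Q 2 (y+1) (by omega) (by omega) (by omega) (by omega),
            w_eql n c s Q 1 (y+2) (by omega) (by omega) (by omega) (by omega),
            w_eql n c (s+1) Q 0 (y+3) (by omega) (by omega) (by omega) (by omega),
            w_eqr n c (s+2) (y+3) 0 Q (by omega) (by omega) (by omega) (by omega)]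
        split_ifs <;> try (exfalso; omega)
        unfold wf
        simp only [show 2*(y+1)+1 = 2*y+3 by omega, show 2*(y+1) = 2*y+2 by omega,
          show 2*(y+2)+1 = 2*y+5 by omega, show 2*(y+2) = 2*y+4 by omega,
          show 2*(y+3)+1 = 2*y+7 by omega, show 2*(y+3) = 2*y+6 by omega,
          show 3+1 = 4 by omega, show 2+1 = 3 by omega, show 1+1 = 2 by omega,
          show 0+1 = 1 by omega,
          fz3, fz4, fz5, fz6, fz7, fz_add_two, fzv0, fzv1, fzv2, fzv3, fzv4]
        ring
    · -- s = c
      have hsc0 : s = c := by omega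
      rcases Nat.lt_or_ge c 3 with hc3 | hc3
      · rcases Nat.lt_or_ge c 2 with hcc | hcc
        · -- c = 1
          obtain ⟨R, hR⟩ : ∃ R, n = 3+R := ⟨n-3, by omega⟩
          rw [w_eql n c s (R+1) 0 0 (by omega) (by omega) (by omega) (by omega),
              w_eqr n c (s+1) 0 0 (R+1) (by omega) (by omega) (by omega) (by omega),
              w_eqr n c (s+2) 0 1 R (by omega) (by omega) (by omega) (by omega)]
          split_ifs <;> try (exfalso; omega)
          rw [show 2*n-2 = 2*R+4 by omega]
          unfold wf
          simp only [show 2*(R+1)+1 = 2*R+3 by omega, show 2*(R+1) = 2*R+2 by omega,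
            show 2*0+1 = 1 by omega, show 2*0 = 0 by omega,
            show 1+1 = 2 by omega, show 0+1 = 1 by omega,
            fz3, fz4, fz_add_two, fzv0, fzv1, fzv2]
          ring
        · -- c = 2
          rcases Nat.lt_or_ge (c+2) (n+1) with hn2 | hn2
          · -- c+2 ≤ n
            obtain ⟨R, hR⟩ : ∃ R, n = 4+R := ⟨n-4, by omega⟩
            rw [w_eql n c (s-1) (R+1) 1 0 (by omega) (by omega) (by omega) (by omega),
                w_eql n c s (R+1) 0 1 (by omega) (by omega) (by omega) (by omega),
                w_eqr n c (s+1) 1 0 (R+1) (by omega) (by omega) (by omega) (by omega),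
                w_eqr n c (s+2) 1 1 R (by omega) (by omega) (by omega) (by omega)]
            split_ifs <;> try (exfalso; omega)
            rw [show 2*n-2 = 2+(2*R+3)+1 by omega, fz_add]
            unfold wf
            simp only [show 2*(R+1)+1 = 2*R+3 by omega, show 2*(R+1) = 2*R+2 by omega,
              show 2*0+1 = 1 by omega, show 2*0 = 0 by omega,
              show 2*1+1 = 3 by omega, show 2*1 = 2 by omega,
              show 1+1 = 2 by omega, show 0+1 = 1 by omega, show 2+1 = 3 by omega,
              show 2*R+3+1 = 2*R+4 by omega,
              fz3, fz4, fz_add_two, fzv0, fzv1, fzv2, fzv3]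
            ring
          · -- c = 2, n = 3
            have hn3 : n = 3 := by omega
            rw [w_eql n c (s-1) 0 1 0 (by omega) (by omega) (by omega) (by omega),
                w_eql n c s 0 0 1 (by omega) (by omega) (by omega) (by omega),
                w_eqr n c (s+1) 1 0 0 (by omega) (by omega) (by omega) (by omega)]
            split_ifs <;> try (exfalso; omega)
            rw [show 2*n-2 = 4 by omega]
            unfold wf
            simp only [show 2*0+1 = 1 by omega, show 2*0 = 0 by omega,
              show 2*1+1 = 3 by omega, show 2*1 = 2 by omega,
              show 1+1 = 2 by omega, show 0+1 = 1 by omega,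
              fzv0, fzv1, fzv2, fzv3, fzv4]
            ring
      · -- c ≥ 3
        obtain ⟨y, hy⟩ : ∃ y, c = y+3 := ⟨c-3, by omega⟩
        rcases Nat.lt_or_ge (c+2) (n+1) with hn2 | hn2
        · -- c+2 ≤ n
          obtain ⟨R, hR⟩ : ∃ R, n = c+2+R := ⟨n-c-2, by omega⟩
          rw [w_eql n c (s-2) (R+1) 2 y (by omega) (by omega) (by omega) (by omega),
              w_eql n c (s-1) (R+1) 1 (y+1) (by omega) (by omega) (by omega) (by omega),
              w_eql n c s (R+1) 0 (y+2) (by omega) (by omega) (by omega) (by omega),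
              w_eqr n c (s+1) (y+2) 0 (R+1) (by omega) (by omega) (by omega) (by omega),
              w_eqr n c (s+2) (y+2) 1 R (by omega) (by omega) (by omega) (by omega)]
          split_ifs <;> try (exfalso; omega)
          rw [show 2*n-2 = (2*y+6)+(2*R+1)+1 by omega, fz_add]
          unfold wf
          simp only [show 2*(R+1)+1 = 2*R+3 by omega, show 2*(R+1) = 2*R+2 by omega,
            show 2*(y+1)+1 = 2*y+3 by omega, show 2*(y+1) = 2*y+2 by omega,
            show 2*(y+2)+1 = 2*y+5 by omega, show 2*(y+2) = 2*y+4 by omega,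
            show 2+1 = 3 by omega, show 1+1 = 2 by omega, show 0+1 = 1 by omega,
            show 2*y+6+1 = 2*y+7 by omega, show 2*R+1+1 = 2*R+2 by omega,
            fz3, fz4, fz5, fz6, fz7, fz_add_two, fzv0, fzv1, fzv2, fzv3]
          ring
        · -- c = n-1
          have hcn : c+1 = n := by omega
          rw [w_eql n c (s-2) 0 2 y (by omega) (by omega) (by omega) (by omega),
              w_eql n c (s-1) 0 1 (y+1) (by omega) (by omega) (by omega) (by omega),
              w_eql n c s 0 0 (y+2) (by omega) (by omega) (by omega) (by omega),
              w_eqr n c (s+1) (y+2) 0 0 (by omega) (by omega) (by omega) (by omega)]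
          split_ifs <;> try (exfalso; omega)
          rw [show 2*n-2 = 2*y+6 by omega]
          unfold wf
          simp only [show 2*(y+1)+1 = 2*y+3 by omega, show 2*(y+1) = 2*y+2 by omega,
            show 2*(y+2)+1 = 2*y+5 by omega, show 2*(y+2) = 2*y+4 by omega,
            show 2*0+1 = 1 by omega, show 2*0 = 0 by omega,
            show 2+1 = 3 by omega, show 1+1 = 2 by omega, show 0+1 = 1 by omega,
            fz3, fz4, fz5, fz6, fz_add_two, fzv0, fzv1, fzv2, fzv3]
          ring


lemma w_reflect (n c t : ℕ) (h1 : 1 ≤ t) (h2 : t ≤ n) (hc1 : 1 ≤ c) (hc2 : c+1 ≤ n) :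
    w n (n-c) (n+1-t) = - w n c t := by
  by_cases h : t ≤ c
  · have hh : ¬ (n+1-t ≤ n-c) := by omega
    unfold w
    rw [if_pos h, if_neg hh,
      show (n-c)-1 = n-c-1 by omega,
      show (n+1-t)-(n-c)-1 = c-t by omega,
      show n-(n+1-t) = t-1 by omega]
  · have hh : n+1-t ≤ n-c := by omega
    unfold w
    rw [if_neg h, if_pos hh,
      show n-(n-c)-1 = c-1 by omega,
      show (n-c)-(n+1-t) = t-c-1 by omega,
      show (n+1-t)-1 = n-t by omega, neg_neg]

lemma w_harm (n c s : ℕ) (hn : 3 ≤ n) (hc1 : 1 ≤ c) (hc2 : c+1 ≤ n) (hs1 : 1 ≤ s)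
    (hs2 : s ≤ n) :
    (if 3 ≤ s then w n c s - w n c (s-2) else 0) +
    (if 2 ≤ s then w n c s - w n c (s-1) else 0) +
    (if s+1 ≤ n then w n c s - w n c (s+1) else 0) +
    (if s+2 ≤ n then w n c s - w n c (s+2) else 0)
      = if s = c then 2 * fz (2*n-2) else if s = c+1 then -(2 * fz (2*n-2)) else 0 := by
  rcases le_or_gt s c with h | h
  · rw [w_harm_le n c s hn hc1 hc2 hs1 h]
    by_cases hh : s = c
    · rw [if_pos hh, if_pos hh]
    · rw [if_neg hh, if_neg hh, if_neg (by omega : ¬ s = c+1)]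
  · -- s ≥ c+1 : use reflection
    have key := w_harm_le n (n-c) (n+1-s) hn (by omega) (by omega) (by omega) (by omega)
    have hA : w n (n-c) (n+1-s) = - w n c s := w_reflect n c s hs1 hs2 hc1 hc2
    have hD : 2 ≤ s := by omega
    have hD' : w n (n-c) (n+1-s+1) = - w n c (s-1) := by
      rw [show n+1-s+1 = n+1-(s-1) by omega]
      exact w_reflect n c (s-1) (by omega) (by omega) hc1 hc2
    -- guards on the reflected side
    have g1 : (3 ≤ n+1-s) ↔ (s+2 ≤ n) := by omega
    have g2 : (2 ≤ n+1-s) ↔ (s+1 ≤ n) := by omega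
    have g3 : (n+1-s+1 ≤ n) ↔ (2 ≤ s) := by omega
    have g4 : (n+1-s+2 ≤ n) ↔ (3 ≤ s) := by omega
    have g5 : (n+1-s = n-c) ↔ (s = c+1) := by omega
    have hsc : ¬ (s = c) := by omega
    rw [if_neg hsc]
    by_cases e1 : 3 ≤ s
    · have hE : w n (n-c) (n+1-s+2) = - w n c (s-2) := by
        rw [show n+1-s+2 = n+1-(s-2) by omega]
        exact w_reflect n c (s-2) (by omega) (by omega) hc1 hc2
      by_cases e3 : s+1 ≤ n
      · have hC : w n (n-c) (n+1-s-1) = - w n c (s+1) := by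
          rw [show n+1-s-1 = n+1-(s+1) by omega]
          exact w_reflect n c (s+1) (by omega) (by omega) hc1 hc2
        by_cases e4 : s+2 ≤ n
        · have hB : w n (n-c) (n+1-s-2) = - w n c (s+2) := by
            rw [show n+1-s-2 = n+1-(s+2) by omega]
            exact w_reflect n c (s+2) (by omega) (by omega) hc1 hc2
          rw [if_pos (g1.mpr e4), if_pos (g2.mpr e3), if_pos (g3.mpr hD),
            if_pos (g4.mpr e1), hA, hB, hC, hD', hE] at key
          rw [if_pos e1, if_pos hD, if_pos e3, if_pos e4]
          by_cases e5 : s = c+1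
          · rw [if_pos (g5.mpr e5)] at key; rw [if_pos e5]; linarith
          · rw [if_neg (fun hq => e5 (g5.mp hq))] at key; rw [if_neg e5]; linarith
        · rw [if_neg (fun hq => e4 (g1.mp hq)), if_pos (g2.mpr e3), if_pos (g3.mpr hD),
            if_pos (g4.mpr e1), hA, hC, hD', hE] at key
          rw [if_pos e1, if_pos hD, if_pos e3, if_neg e4]
          by_cases e5 : s = c+1
          · rw [if_pos (g5.mpr e5)] at key; rw [if_pos e5]; linarith
          · rw [if_neg (fun hq => e5 (g5.mp hq))] at key; rw [if_neg e5]; linarith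
      · have e4 : ¬ (s+2 ≤ n) := by omega
        rw [if_neg (fun hq => e4 (g1.mp hq)), if_neg (fun hq => e3 (g2.mp hq)),
          if_pos (g3.mpr hD), if_pos (g4.mpr e1), hA, hD', hE] at key
        rw [if_pos e1, if_pos hD, if_neg e3, if_neg e4]
        by_cases e5 : s = c+1
        · rw [if_pos (g5.mpr e5)] at key; rw [if_pos e5]; linarith
        · rw [if_neg (fun hq => e5 (g5.mp hq))] at key; rw [if_neg e5]; linarith
    · -- s = 2 (since s ≥ c+1 ≥ 2)
      have hs2' : s = 2 := by omega
      have e3 : s+1 ≤ n := by omega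
      have hC : w n (n-c) (n+1-s-1) = - w n c (s+1) := by
        rw [show n+1-s-1 = n+1-(s+1) by omega]
        exact w_reflect n c (s+1) (by omega) (by omega) hc1 hc2
      by_cases e4 : s+2 ≤ n
      · have hB : w n (n-c) (n+1-s-2) = - w n c (s+2) := by
          rw [show n+1-s-2 = n+1-(s+2) by omega]
          exact w_reflect n c (s+2) (by omega) (by omega) hc1 hc2
        rw [if_pos (g1.mpr e4), if_pos (g2.mpr e3), if_pos (g3.mpr hD),
          if_neg (fun hq => e1 (g4.mp hq)), hA, hB, hC, hD'] at key
        rw [if_neg e1, if_pos hD, if_pos e3, if_pos e4]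
        by_cases e5 : s = c+1
        · rw [if_pos (g5.mpr e5)] at key; rw [if_pos e5]; linarith
        · rw [if_neg (fun hq => e5 (g5.mp hq))] at key; rw [if_neg e5]; linarith
      · rw [if_neg (fun hq => e4 (g1.mp hq)), if_pos (g2.mpr e3), if_pos (g3.mpr hD),
          if_neg (fun hq => e1 (g4.mp hq)), hA, hC, hD'] at key
        rw [if_neg e1, if_pos hD, if_pos e3, if_neg e4]
        by_cases e5 : s = c+1
        · rw [if_pos (g5.mpr e5)] at key; rw [if_pos e5]; linarith
        · rw [if_neg (fun hq => e5 (g5.mp hq))] at key; rw [if_neg e5]; linarith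


def gf (n c t : ℕ) : ℤ := if t ≤ c then T (t-1) (n-c) (c-t) else T (c-1) (n-t) (t-c)

lemma gf_eql (n c t p q k : ℕ) (h : t ≤ c) (hp : t-1 = p) (hq : n-c = q) (hk : c-t = k) :
    gf n c t = T p q k := by
  unfold gf; rw [if_pos h, hp, hq, hk]

lemma gf_eqr (n c t p q k : ℕ) (h : ¬ (t ≤ c)) (hp : c-1 = p) (hq : n-t = q) (hk : t-c = k) :
    gf n c t = T p q k := by
  unfold gf; rw [if_neg h, hp, hq, hk]

lemma five_w (n c t : ℕ) (h1 : 1 ≤ t) (ht : t ≤ n) (hc1 : 1 ≤ c) (hc2 : c+1 ≤ n) :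
    5 * w n c t = gf n (c+1) t - gf n c t := by
  by_cases h : t ≤ c
  · have e1 : w n c t = wf (n-c-1) (c-t) (t-1) := w_eql n c t _ _ _ h rfl rfl rfl
    have e2 : gf n (c+1) t = T (t-1) (n-c-1) ((c-t)+1) :=
      gf_eql n (c+1) t (t-1) (n-c-1) ((c-t)+1) (by omega) rfl (by omega) (by omega)
    have e3 : gf n c t = T (t-1) ((n-c-1)+1) (c-t) :=
      gf_eql n c t (t-1) ((n-c-1)+1) (c-t) h rfl (by omega) rfl
    have hs := step_q (t-1) (n-c-1) (c-t)
    rw [e1, e2, e3]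
    unfold wf
    linarith [hs]
  · have e1 : w n c t = - wf (c-1) (t-c-1) (n-t) := w_eqr n c t _ _ _ h rfl rfl rfl
    have e2 : gf n (c+1) t = T ((c-1)+1) (n-t) (t-c-1) := by
      by_cases h' : t ≤ c+1
      · exact gf_eql n (c+1) t ((c-1)+1) (n-t) (t-c-1) h' (by omega) (by omega) (by omega)
      · exact gf_eqr n (c+1) t ((c-1)+1) (n-t) (t-c-1) h' (by omega) (by omega) (by omega)
    have e3 : gf n c t = T (c-1) (n-t) ((t-c-1)+1) :=
      gf_eqr n c t (c-1) (n-t) ((t-c-1)+1) h rfl rfl (by omega)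
    have hs := step_p (c-1) (n-t) (t-c-1)
    rw [e1, e2, e3]
    unfold wf
    linarith [hs]

lemma tele (n t : ℕ) (h1 : 1 ≤ t) (ht : t ≤ n) :
    ∀ d a, 1 ≤ a → a+d ≤ n → ∑ c ∈ Finset.Ico a (a+d), (5 * w n c t) = gf n (a+d) t - gf n a t := by
  intro d
  induction d with
  | zero => intro a _ _; simp
  | succ d ih =>
    intro a ha hd
    rw [show a+(d+1) = (a+d)+1 by omega, Finset.sum_Ico_succ_top (by omega),
      ih a ha (by omega), five_w n (a+d) t h1 ht (by omega) (by omega)]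
    ring

lemma mulVec_lap (n : ℕ) (x : Fin n → ℝ) (s : Fin n) :
    (lap (linear2Tree n)).mulVec x s
      = ∑ t : Fin n, (if (linear2Tree n).Adj s t then x s - x t else 0) := by
  classical
  unfold lap Matrix.mulVec dotProduct
  simp only [Matrix.of_apply]
  have hterm : ∀ t : Fin n,
      (if s = t then (∑ c : Fin n, if (linear2Tree n).Adj s c then (1:ℝ) else 0)
        else if (linear2Tree n).Adj s t then -1 else 0) * x t
      = (if s = t then (∑ c : Fin n, if (linear2Tree n).Adj s c then (1:ℝ) else 0) * x t else 0)
        + (if (linear2Tree n).Adj s t then -(x t) else 0) := by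
    intro t
    by_cases h : s = t
    · subst h
      rw [if_pos rfl, if_pos rfl, if_neg ((linear2Tree n).irrefl)]
      ring
    · rw [if_neg h, if_neg h]
      by_cases ha : (linear2Tree n).Adj s t
      · rw [if_pos ha, if_pos ha]; ring
      · rw [if_neg ha, if_neg ha]; ring
  rw [Finset.sum_congr rfl (fun t _ => hterm t), Finset.sum_add_distrib,
    Finset.sum_ite_eq Finset.univ s (fun t => (∑ c : Fin n, if (linear2Tree n).Adj s c then (1:ℝ) else 0) * x t),
    if_pos (Finset.mem_univ s)]
  have hrhs : ∀ t : Fin n, (if (linear2Tree n).Adj s t then x s - x t else 0)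
      = (if (linear2Tree n).Adj s t then (1:ℝ) else 0) * x s + (if (linear2Tree n).Adj s t then -(x t) else 0) := by
    intro t
    by_cases ha : (linear2Tree n).Adj s t
    · rw [if_pos ha, if_pos ha, if_pos ha]; ring
    · rw [if_neg ha, if_neg ha, if_neg ha]; ring
  rw [Finset.sum_congr rfl (fun t _ => hrhs t), Finset.sum_add_distrib, ← Finset.sum_mul]

lemma foursum (n : ℕ) (X : ℕ → ℝ) (s : Fin n) :
    ∑ t : Fin n, (if (linear2Tree n).Adj s t then X (s.1+1) - X (t.1+1) else 0)
      = (if 3 ≤ s.1+1 then X (s.1+1) - X (s.1+1-2) else 0)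
      + (if 2 ≤ s.1+1 then X (s.1+1) - X (s.1+1-1) else 0)
      + (if s.1+1+1 ≤ n then X (s.1+1) - X (s.1+1+1) else 0)
      + (if s.1+1+2 ≤ n then X (s.1+1) - X (s.1+1+2) else 0) := by
  classical
  have hsplit : ∀ t : Fin n, (if (linear2Tree n).Adj s t then X (s.1+1) - X (t.1+1) else 0)
      = (if t.1+2 = s.1 then X (s.1+1) - X (t.1+1) else 0)
      + (if t.1+1 = s.1 then X (s.1+1) - X (t.1+1) else 0)
      + (if s.1+1 = t.1 then X (s.1+1) - X (t.1+1) else 0)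
      + (if s.1+2 = t.1 then X (s.1+1) - X (t.1+1) else 0) := by
    intro t
    by_cases had : (linear2Tree n).Adj s t
    · obtain ⟨hne, hb1, hb2⟩ := had
      have hv : s.1 ≠ t.1 := fun hq => hne (Fin.ext hq)
      rw [if_pos ⟨hne, hb1, hb2⟩]
      have hcase : t.1+2 = s.1 ∨ t.1+1 = s.1 ∨ s.1+1 = t.1 ∨ s.1+2 = t.1 := by omega
      rcases hcase with h | h | h | h
      · rw [if_pos h, if_neg (by omega), if_neg (by omega), if_neg (by omega)]; ring
      · rw [if_neg (by omega), if_pos h, if_neg (by omega), if_neg (by omega)]; ring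
      · rw [if_neg (by omega), if_neg (by omega), if_pos h, if_neg (by omega)]; ring
      · rw [if_neg (by omega), if_neg (by omega), if_neg (by omega), if_pos h]; ring
    · rw [if_neg had,
        if_neg (fun h => had ⟨Fin.ne_of_val_ne (by omega), by omega, by omega⟩),
        if_neg (fun h => had ⟨Fin.ne_of_val_ne (by omega), by omega, by omega⟩),
        if_neg (fun h => had ⟨Fin.ne_of_val_ne (by omega), by omega, by omega⟩),
        if_neg (fun h => had ⟨Fin.ne_of_val_ne (by omega), by omega, by omega⟩)]
      ring
  rw [Finset.sum_congr rfl (fun t _ => hsplit t), Finset.sum_add_distrib,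
    Finset.sum_add_distrib, Finset.sum_add_distrib]
  have hS1 : ∑ t : Fin n, (if t.1+2 = s.1 then X (s.1+1) - X (t.1+1) else 0)
      = if 3 ≤ s.1+1 then X (s.1+1) - X (s.1+1-2) else 0 := by
    by_cases hg : 3 ≤ s.1+1
    · have hlt : s.1-2 < n := by omega
      rw [if_pos hg, Finset.sum_eq_single (⟨s.1-2, hlt⟩ : Fin n)]
      · rw [if_pos (by simp; omega)]
        congr 1
        congr 1
        simp; omega
      · intro b _ hb
        exact if_neg (fun h => hb (Fin.ext (by simp; omega)))
      · intro h; exact absurd (Finset.mem_univ _) h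
    · rw [if_neg hg, Finset.sum_eq_zero]
      intro t _
      exact if_neg (by omega)
  have hS2 : ∑ t : Fin n, (if t.1+1 = s.1 then X (s.1+1) - X (t.1+1) else 0)
      = if 2 ≤ s.1+1 then X (s.1+1) - X (s.1+1-1) else 0 := by
    by_cases hg : 2 ≤ s.1+1
    · have hlt : s.1-1 < n := by omega
      rw [if_pos hg, Finset.sum_eq_single (⟨s.1-1, hlt⟩ : Fin n)]
      · rw [if_pos (by simp; omega)]
        congr 1
        congr 1
        simp; omega
      · intro b _ hb
        exact if_neg (fun h => hb (Fin.ext (by simp; omega)))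
      · intro h; exact absurd (Finset.mem_univ _) h
    · rw [if_neg hg, Finset.sum_eq_zero]
      intro t _
      exact if_neg (by omega)
  have hS3 : ∑ t : Fin n, (if s.1+1 = t.1 then X (s.1+1) - X (t.1+1) else 0)
      = if s.1+1+1 ≤ n then X (s.1+1) - X (s.1+1+1) else 0 := by
    by_cases hg : s.1+1+1 ≤ n
    · have hlt : s.1+1 < n := by omega
      rw [if_pos hg, Finset.sum_eq_single (⟨s.1+1, hlt⟩ : Fin n)]
      · rw [if_pos (by simp)]
      · intro b _ hb
        exact if_neg (fun h => hb (Fin.ext (by simp; omega)))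
      · intro h; exact absurd (Finset.mem_univ _) h
    · rw [if_neg hg, Finset.sum_eq_zero]
      intro t _
      exact if_neg (by omega)
  have hS4 : ∑ t : Fin n, (if s.1+2 = t.1 then X (s.1+1) - X (t.1+1) else 0)
      = if s.1+1+2 ≤ n then X (s.1+1) - X (s.1+1+2) else 0 := by
    by_cases hg : s.1+1+2 ≤ n
    · have hlt : s.1+2 < n := by omega
      rw [if_pos hg, Finset.sum_eq_single (⟨s.1+2, hlt⟩ : Fin n)]
      · rw [if_pos (by simp)]
      · intro b _ hb
        exact if_neg (fun h => hb (Fin.ext (by simp; omega)))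
      · intro h; exact absurd (Finset.mem_univ _) h
    · rw [if_neg hg, Finset.sum_eq_zero]
      intro t _
      exact if_neg (by omega)
  rw [hS1, hS2, hS3, hS4]


lemma res_eq (n a k : ℕ) (hn : 3 ≤ n) (ha : 1 ≤ a) (hk : 1 ≤ k) (hb : a+k ≤ n)
    (i j : Fin n) (hi : (i:ℕ)+1 = a) (hj : (j:ℕ)+1 = a+k)
    (r : ℝ) (hr : IsResistance (linear2Tree n) i j r) :
    r * (5 * ((fz (2*n-2) : ℤ) : ℝ)) = ((T (a-1) (n-a-k) k : ℤ) : ℝ) := by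
  have hF : (0:ℤ) < fz (2*n-2) := by
    rw [show 2*n-2 = (2*n-3)+1 by omega]; exact fz_pos _
  have hFr : (0:ℝ) < ((fz (2*n-2) : ℤ) : ℝ) := by exact_mod_cast hF
  set F2 : ℝ := ((fz (2*n-2) : ℤ) : ℝ) with hF2def
  set X : ℕ → ℝ := fun m => ((∑ c ∈ Finset.Ico a (a+k), w n c m : ℤ) : ℝ) / (2*F2) with hX
  have hsol : (lap (linear2Tree n)).mulVec (fun t : Fin n => X (t.1+1)) = esrc i j := by
    funext s
    have hfs := foursum n X s
    rw [mulVec_lap, hfs]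
    have hterm : ∀ (P : Prop) [Decidable P], ∀ u v' : ℕ,
        (if P then X u - X v' else 0)
          = ((if P then (∑ c ∈ Finset.Ico a (a+k), w n c u)
                - (∑ c ∈ Finset.Ico a (a+k), w n c v') else 0 : ℤ) : ℝ) / (2*F2) := by
      intro P _ u v'
      by_cases h : P
      · rw [if_pos h, if_pos h, hX]
        push_cast
        rw [sub_div]
      · rw [if_neg h, if_neg h]; simp
    rw [hterm _ _ _, hterm _ _ _, hterm _ _ _, hterm _ _ _,
      ← add_div, ← add_div, ← add_div,
      ← Int.cast_add, ← Int.cast_add, ← Int.cast_add]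
    have hsplit : ∀ (P : Prop) [Decidable P] (u v' : ℕ),
        (if P then (∑ c ∈ Finset.Ico a (a+k), w n c u)
            - (∑ c ∈ Finset.Ico a (a+k), w n c v') else 0)
          = ∑ c ∈ Finset.Ico a (a+k), (if P then w n c u - w n c v' else 0) := by
      intro P _ u v'
      by_cases h : P
      · rw [if_pos h, ← Finset.sum_sub_distrib]
        exact Finset.sum_congr rfl (fun c _ => by rw [if_pos h])
      · rw [if_neg h]
        exact (Finset.sum_eq_zero (fun c _ => by rw [if_neg h])).symm
    rw [hsplit _ _ _, hsplit _ _ _, hsplit _ _ _, hsplit _ _ _,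
      ← Finset.sum_add_distrib, ← Finset.sum_add_distrib, ← Finset.sum_add_distrib]
    have hz : ∑ c ∈ Finset.Ico a (a+k),
        ((if 3 ≤ s.1+1 then w n c (s.1+1) - w n c (s.1+1-2) else 0)
         + (if 2 ≤ s.1+1 then w n c (s.1+1) - w n c (s.1+1-1) else 0)
         + (if s.1+1+1 ≤ n then w n c (s.1+1) - w n c (s.1+1+1) else 0)
         + (if s.1+1+2 ≤ n then w n c (s.1+1) - w n c (s.1+1+2) else 0))
        = (if s.1+1 = a then 2*fz (2*n-2) else 0) - (if s.1+1 = a+k then 2*fz (2*n-2) else 0) := by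
      have hcong : ∀ c ∈ Finset.Ico a (a+k),
          ((if 3 ≤ s.1+1 then w n c (s.1+1) - w n c (s.1+1-2) else 0)
           + (if 2 ≤ s.1+1 then w n c (s.1+1) - w n c (s.1+1-1) else 0)
           + (if s.1+1+1 ≤ n then w n c (s.1+1) - w n c (s.1+1+1) else 0)
           + (if s.1+1+2 ≤ n then w n c (s.1+1) - w n c (s.1+1+2) else 0))
          = (if s.1+1 = c then 2*fz (2*n-2) else 0) + (if s.1 = c then -(2*fz (2*n-2)) else 0) := by
        intro c hc
        rw [Finset.mem_Ico] at hc
        rw [w_harm n c (s.1+1) hn (by omega) (by omega) (by omega) (by omega)]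
        by_cases h1 : s.1+1 = c
        · rw [if_pos h1, if_pos h1, if_neg (by omega)]; ring
        · by_cases h2 : s.1+1 = c+1
          · rw [if_neg h1, if_pos h2, if_neg h1, if_pos (by omega)]; ring
          · rw [if_neg h1, if_neg h2, if_neg h1, if_neg (by omega)]; ring
      rw [Finset.sum_congr rfl hcong, Finset.sum_add_distrib,
        Finset.sum_ite_eq (Finset.Ico a (a+k)) (s.1+1) (fun _ => 2*fz (2*n-2)),
        Finset.sum_ite_eq (Finset.Ico a (a+k)) s.1 (fun _ => -(2*fz (2*n-2)))]
      simp only [Finset.mem_Ico]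
      split_ifs <;> first | (exfalso; omega) | ring1
    rw [hz]
    unfold esrc
    have hsi : (s = i) ↔ (s.1+1 = a) := by rw [Fin.ext_iff]; omega
    have hsj : (s = j) ↔ (s.1+1 = a+k) := by rw [Fin.ext_iff]; omega
    by_cases e1 : s.1+1 = a <;> by_cases e2 : s.1+1 = a+k
    · exfalso; omega
    · rw [if_pos e1, if_neg e2, if_pos (hsi.mpr e1), if_neg (fun h => e2 (hsj.mp h))]
      push_cast
      field_simp
      rw [hF2def]; ring
    · rw [if_neg e1, if_pos e2, if_neg (fun h => e1 (hsi.mp h)), if_pos (hsj.mpr e2)]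
      push_cast
      field_simp
      rw [hF2def]; ring
    · rw [if_neg e1, if_neg e2, if_neg (fun h => e1 (hsi.mp h)), if_neg (fun h => e2 (hsj.mp h))]
      push_cast
      simp
  have hval := hr.2 _ hsol
  have hvi : ((i : ℕ)) + 1 = a := hi
  have hvj : ((j : ℕ)) + 1 = a+k := hj
  rw [hvi, hvj] at hval
  -- telescoping values
  have h5a : 5 * (∑ c ∈ Finset.Ico a (a+k), w n c a) = T (a-1) (n-a-k) k := by
    have ht := tele n a ha (by omega) k a ha (by omega)
    rw [← Finset.mul_sum] at ht
    rw [ht, gf_eql n (a+k) a (a-1) (n-a-k) k (by omega) rfl (by omega) (by omega),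
      gf_eql n a a (a-1) (n-a) 0 (le_refl a) rfl rfl (by omega), T_zero]
    ring
  have h5b : 5 * (∑ c ∈ Finset.Ico a (a+k), w n c (a+k)) = - T (a-1) (n-a-k) k := by
    have ht := tele n (a+k) (by omega) (by omega) k a ha (by omega)
    rw [← Finset.mul_sum] at ht
    rw [ht, gf_eql n (a+k) (a+k) (a+k-1) (n-(a+k)) 0 (le_refl _) rfl rfl (by omega), T_zero,
      gf_eqr n a (a+k) (a-1) (n-a-k) k (by omega) rfl (by omega) (by omega)]
    ring
  have hcast : (5:ℝ) * (((∑ c ∈ Finset.Ico a (a+k), w n c a : ℤ) : ℝ)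
      - ((∑ c ∈ Finset.Ico a (a+k), w n c (a+k) : ℤ) : ℝ)) = 2 * ((T (a-1) (n-a-k) k : ℤ) : ℝ) := by
    have hzz : (5 * ((∑ c ∈ Finset.Ico a (a+k), w n c a)
        - (∑ c ∈ Finset.Ico a (a+k), w n c (a+k))) : ℤ) = 2 * T (a-1) (n-a-k) k := by
      rw [mul_sub, h5a, h5b]; ring
    exact_mod_cast congrArg (fun z : ℤ => (z : ℝ)) hzz
  rw [hval, hX]
  have h2F : (2*F2) ≠ 0 := by positivity
  simp only []
  rw [← sub_div, div_mul_eq_mul_div, div_eq_iff h2F]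
  linear_combination F2 * hcast

end S13

/-- **monotonicity.** For the straight linear 2-tree on `n ≥ 3` vertices, if
`1 ≤ j' ≤ j < j + k ≤ j' + k' ≤ n`, then `r(j', j'+k') - r(j, j+k) ≥ 0`, with equality iff
(1) `j' = j` and `k' = k`; or (2) `j' = j = 1`, `k = 1`, `k' = 2`; or
(3) `j' = n - 2`, `j = n - 1`, `k = 1`, `k' = 2`. -/


theorem stmt13 (n : ℕ) (hn : 3 ≤ n) (j j' k k' : ℕ)
    (h1 : 1 ≤ j') (h2 : j' ≤ j) (h3 : 1 ≤ k) (h4 : j + k ≤ j' + k') (h5 : j' + k' ≤ n)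
    (r r' : ℝ)
    (hr : IsResistance (linear2Tree n) ⟨j - 1, by omega⟩ ⟨j + k - 1, by omega⟩ r)
    (hr' : IsResistance (linear2Tree n) ⟨j' - 1, by omega⟩ ⟨j' + k' - 1, by omega⟩ r') :
    0 ≤ r' - r ∧
      (r' - r = 0 ↔
        (j' = j ∧ k' = k) ∨
        (j' = 1 ∧ j = 1 ∧ k = 1 ∧ k' = 2) ∨
        (j' = n - 2 ∧ j = n - 1 ∧ k = 1 ∧ k' = 2)) := by
  have hj1 : 1 ≤ j := le_trans h1 h2
  have hk'1 : 1 ≤ k' := by omega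
  have hra := S13.res_eq n j k hn hj1 h3 (by omega) ⟨j-1, by omega⟩ ⟨j+k-1, by omega⟩
    (by show j-1+1 = j; omega) (by show j+k-1+1 = j+k; omega) r hr
  have hrb := S13.res_eq n j' k' hn h1 hk'1 h5 ⟨j'-1, by omega⟩ ⟨j'+k'-1, by omega⟩
    (by show j'-1+1 = j'; omega) (by show j'+k'-1+1 = j'+k'; omega) r' hr'
  have hF : (0:ℤ) < S13.fz (2*n-2) := by
    rw [show 2*n-2 = (2*n-3)+1 by omega]; exact S13.fz_pos _
  have hFr : (0:ℝ) < ((S13.fz (2*n-2) : ℤ) : ℝ) := by exact_mod_cast hF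
  have hmono := S13.T_mono (j-1) (n-j-k) (j'-1) (n-j'-k') k (by omega) (by omega) h3
  have hkk : k + ((j-1)-(j'-1)) + ((n-j-k)-(n-j'-k')) = k' := by omega
  rw [hkk] at hmono
  have hT := hmono.1
  have hTiff := hmono.2
  have h5F : (0:ℝ) < 5 * ((S13.fz (2*n-2) : ℤ) : ℝ) := by linarith
  have hdiff : (r' - r) * (5 * ((S13.fz (2*n-2) : ℤ) : ℝ))
      = ((S13.T (j'-1) (n-j'-k') k' : ℤ) : ℝ) - ((S13.T (j-1) (n-j-k) k : ℤ) : ℝ) := by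
    rw [sub_mul, hra, hrb]
  constructor
  · by_contra hneg
    push_neg at hneg
    have hlt : (r' - r) * (5 * ((S13.fz (2*n-2) : ℤ) : ℝ)) < 0 :=
      mul_neg_of_neg_of_pos (by linarith) h5F
    rw [hdiff] at hlt
    have : ((S13.T (j-1) (n-j-k) k : ℤ) : ℝ) ≤ ((S13.T (j'-1) (n-j'-k') k' : ℤ) : ℝ) := by
      exact_mod_cast hT
    linarith
  · constructor
    · intro h0
      have hz : ((S13.T (j'-1) (n-j'-k') k' : ℤ) : ℝ) = ((S13.T (j-1) (n-j-k) k : ℤ) : ℝ) := by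
        rw [h0, zero_mul] at hdiff
        linarith
    -- convert to ℤ equality
      have hz' : S13.T (j'-1) (n-j'-k') k' = S13.T (j-1) (n-j-k) k := by exact_mod_cast hz
      have := hTiff.mp hz'
      rcases this with ⟨e1, e2⟩ | ⟨e1, e2, e3, e4⟩ | ⟨e1, e2, e3, e4⟩
      · exact Or.inl (by omega)
      · exact Or.inr (Or.inl (by omega))
      · exact Or.inr (Or.inr (by omega))
    · intro hcase
      have hz' : S13.T (j'-1) (n-j'-k') k' = S13.T (j-1) (n-j-k) k := by
        apply hTiff.mpr
        rcases hcase with ⟨e1, e2⟩ | ⟨e1, e2, e3, e4⟩ | ⟨e1, e2, e3, e4⟩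
        · exact Or.inl (by omega)
        · exact Or.inr (Or.inl (by omega))
        · exact Or.inr (Or.inr (by omega))
      have : (r' - r) * (5 * ((S13.fz (2*n-2) : ℤ) : ℝ)) = 0 := by
        rw [hdiff, hz', sub_self]
      rcases mul_eq_zero.mp this with h | h
      · exact h
      · exact absurd h (ne_of_gt h5F)
end
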